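/- arXiv:1508.06341 — 5 statements merged into one kernel-verified Lean document; each statement's English description precedes it below -/
import Mathlib

section
/- Suppose the drift condition holds, i.e., ρ = pᵀβ ≠ 1. Then the m²×m² matrix I − Σ_{v=1}^{N} Σ_{j=0}^{v-1} (G^{v-1-j})ᵀ ⊗ (A_v G^{j}) is a nonsingular M-matrix. -/
set_option linter.unusedSectionVars false
set_option maxHeartbeats 1600000

open Matrix Finset Kronecker
open scoped ENNReal

/-- Spectral radius of a real matrix: the spectral radius of its complexification. -/
noncomputable def specRad {n : Type*} [Fintype n] [DecidableEq n] (B : Matrix n n ℝ) : ℝ≥0∞ :=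
  spectralRadius ℂ (B.map (algebraMap ℝ ℂ))

/-- `M` is a nonsingular M-matrix: a Z-matrix of the form `s • I - B` with `B ≥ 0`
entrywise and `s` greater than the spectral radius of `B`. -/
def IsNonsingMMatrix {n : Type*} [Fintype n] [DecidableEq n] (M : Matrix n n ℝ) : Prop :=
  (∀ i j, i ≠ j → M i j ≤ 0) ∧
  ∃ s : ℝ, ∃ B : Matrix n n ℝ, (∀ i j, 0 ≤ B i j) ∧
    M = s • (1 : Matrix n n ℝ) - B ∧ specRad B < ENNReal.ofReal s

namespace MGAux

open Filter
open scoped Topology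

variable {n : Type*} [Fintype n] [DecidableEq n]

lemma mul_nn {X Y : Matrix n n ℝ} (hX : ∀ i j, 0 ≤ X i j) (hY : ∀ i j, 0 ≤ Y i j) :
    ∀ i j, 0 ≤ (X * Y) i j := by
  intro i j
  rw [Matrix.mul_apply]
  exact Finset.sum_nonneg fun k _ => mul_nonneg (hX i k) (hY k j)

lemma pow_nn {X : Matrix n n ℝ} (hX : ∀ i j, 0 ≤ X i j) : ∀ v, ∀ i j, 0 ≤ (X ^ v) i j := by
  intro v
  induction v with
  | zero =>
    intro i j
    rw [pow_zero, Matrix.one_apply]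
    split <;> norm_num
  | succ v ih =>
    rw [pow_succ]
    exact mul_nn ih hX

lemma mul_le_left {P X Y : Matrix n n ℝ} (hP : ∀ i j, 0 ≤ P i j) (h : ∀ i j, X i j ≤ Y i j) :
    ∀ i j, (P * X) i j ≤ (P * Y) i j := by
  intro i j
  rw [Matrix.mul_apply, Matrix.mul_apply]
  exact Finset.sum_le_sum fun k _ => mul_le_mul_of_nonneg_left (h k j) (hP i k)

lemma mul_le_right {P X Y : Matrix n n ℝ} (hP : ∀ i j, 0 ≤ P i j) (h : ∀ i j, X i j ≤ Y i j) :
    ∀ i j, (X * P) i j ≤ (Y * P) i j := by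
  intro i j
  rw [Matrix.mul_apply, Matrix.mul_apply]
  exact Finset.sum_le_sum fun k _ => mul_le_mul_of_nonneg_right (h i k) (hP k j)

lemma pow_le_pow {X Y : Matrix n n ℝ} (hX : ∀ i j, 0 ≤ X i j) (hXY : ∀ i j, X i j ≤ Y i j) :
    ∀ v i j, (X ^ v) i j ≤ (Y ^ v) i j := by
  intro v
  induction v with
  | zero => intro i j; rw [pow_zero, pow_zero]
  | succ v ih =>
    intro i j
    rw [pow_succ, pow_succ]
    exact le_trans (mul_le_left (pow_nn hX v) hXY i j) (mul_le_right
      (fun a b => le_trans (hX a b) (hXY a b)) ih i j)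

lemma mulVec_nn {X : Matrix n n ℝ} {u : n → ℝ} (hX : ∀ i j, 0 ≤ X i j) (hu : ∀ j, 0 ≤ u j) :
    ∀ i, 0 ≤ (X *ᵥ u) i := by
  intro i
  exact Finset.sum_nonneg fun j _ => mul_nonneg (hX i j) (hu j)

lemma mulVec_mono {X : Matrix n n ℝ} {u w : n → ℝ} (hX : ∀ i j, 0 ≤ X i j) (h : ∀ j, u j ≤ w j) :
    ∀ i, (X *ᵥ u) i ≤ (X *ᵥ w) i := by
  intro i
  exact Finset.sum_le_sum fun j _ => mul_le_mul_of_nonneg_left (h j) (hX i j)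

lemma sum_mulVec {ι : Type*} (s : Finset ι) (M : ι → Matrix n n ℝ) (u : n → ℝ) :
    (∑ v ∈ s, M v) *ᵥ u = ∑ v ∈ s, (M v *ᵥ u) := by
  ext i
  simp only [Matrix.mulVec, dotProduct, Finset.sum_apply, Matrix.sum_apply,
    Finset.sum_mul]
  rw [Finset.sum_comm]

lemma mulVec_sum_vec {ι : Type*} (s : Finset ι) (B : Matrix n n ℝ) (g : ι → (n → ℝ)) :
    B *ᵥ (∑ k ∈ s, g k) = ∑ k ∈ s, B *ᵥ g k := by
  ext i
  simp only [Matrix.mulVec, dotProduct, Finset.sum_apply, Finset.mul_sum]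
  rw [Finset.sum_comm]

lemma pow_mulVec_le {X : Matrix n n ℝ} {u : n → ℝ} {c : ℝ} (hX : ∀ i j, 0 ≤ X i j)
    (hc : 0 ≤ c) (h : ∀ i, (X *ᵥ u) i ≤ c * u i) :
    ∀ v i, (X ^ v *ᵥ u) i ≤ c ^ v * u i := by
  intro v
  induction v with
  | zero => intro i; simp [Matrix.one_mulVec]
  | succ v ih =>
    intro i
    have h1 : (X ^ (v+1)) *ᵥ u = X ^ v *ᵥ (X *ᵥ u) := by
      rw [pow_succ, ← Matrix.mulVec_mulVec]
    rw [h1]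
    calc (X ^ v *ᵥ (X *ᵥ u)) i ≤ (X ^ v *ᵥ (c • u)) i := by
          exact mulVec_mono (pow_nn hX v) (fun j => by simpa using h j) i
      _ = c * (X ^ v *ᵥ u) i := by rw [Matrix.mulVec_smul]; simp
      _ ≤ c * (c ^ v * u i) := by
          exact mul_le_mul_of_nonneg_left (ih i) hc
      _ = c ^ (v+1) * u i := by ring

/-- superadditivity: `Y^v ≥ X^v + ∑_t X^t (Y-X) X^(v-1-t)` entrywise. -/
lemma superadd {X Y : Matrix n n ℝ} (hX : ∀ i j, 0 ≤ X i j) (hXY : ∀ i j, X i j ≤ Y i j) :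
    ∀ v i j, (X ^ v) i j + (∑ t ∈ Finset.range v, X ^ t * (Y - X) * X ^ (v - 1 - t)) i j
      ≤ (Y ^ v) i j := by
  intro v
  induction v with
  | zero => intro i j; simp
  | succ v ih =>
    intro i j
    have hY : ∀ i j, 0 ≤ Y i j := fun a b => le_trans (hX a b) (hXY a b)
    have hQv : ∀ i j, 0 ≤ (Y ^ v - X ^ v) i j := fun a b => by
      rw [Matrix.sub_apply]; linarith [pow_le_pow hX hXY v a b]
    have hP : ∀ i j, 0 ≤ (Y - X) i j := fun a b => by
      rw [Matrix.sub_apply]; linarith [hXY a b]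
    have h1 := mul_nn hP hQv i j
    have hSle : ∀ a b, (∑ t ∈ Finset.range v, X ^ t * (Y - X) * X ^ (v - 1 - t)) a b
        ≤ (Y ^ v - X ^ v) a b := fun a b => by
      rw [Matrix.sub_apply]; linarith [ih a b]
    have h2 := mul_le_left hX hSle i j
    have h3 : (∑ t ∈ Finset.range (v+1), X ^ t * (Y - X) * X ^ (v + 1 - 1 - t))
        = (Y - X) * X ^ v + X * (∑ t ∈ Finset.range v, X ^ t * (Y - X) * X ^ (v - 1 - t)) := by
      rw [Finset.sum_range_succ']
      rw [Finset.mul_sum]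
      rw [add_comm]
      congr 1
      · simp
      · refine Finset.sum_congr rfl fun t ht => ?_
        have h4 : v + 1 - 1 - (t + 1) = v - 1 - t := by omega
        rw [h4, pow_succ']
        noncomm_ring
    rw [h3]
    have e1 : ((Y - X) * X ^ v + X * (∑ t ∈ Finset.range v, X ^ t * (Y - X) * X ^ (v - 1 - t))) i j
        = ((Y - X) * X ^ v) i j + (X * (∑ t ∈ Finset.range v, X ^ t * (Y - X) * X ^ (v - 1 - t))) i j :=
      Matrix.add_apply _ _ _ _
    rw [e1]
    have e2 : ((Y - X) * (Y ^ v - X ^ v)) i j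
        = (Y * Y ^ v) i j - (X * Y ^ v) i j - (Y * X ^ v) i j + (X * X ^ v) i j := by
      have : (Y - X) * (Y ^ v - X ^ v) = Y * Y ^ v - X * Y ^ v - Y * X ^ v + X * X ^ v := by
        noncomm_ring
      rw [this]
      simp [Matrix.add_apply, Matrix.sub_apply]
    have e3 : ((Y - X) * X ^ v) i j = (Y * X ^ v) i j - (X * X ^ v) i j := by
      rw [Matrix.sub_mul]; simp [Matrix.sub_apply]
    have e4 : (X * (Y ^ v - X ^ v)) i j = (X * Y ^ v) i j - (X * X ^ v) i j := by
      rw [Matrix.mul_sub]; simp [Matrix.sub_apply]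
    have e5 : (X ^ (v+1)) i j = (X * X ^ v) i j := by rw [pow_succ']
    have e6 : (Y ^ (v+1)) i j = (Y * Y ^ v) i j := by rw [pow_succ']
    rw [e5, e6]
    rw [e2] at h1
    rw [e4] at h2
    linarith [h2, h1, e3]

/-- monotone matrix iteration -/
noncomputable def matIter (F : Matrix n n ℝ → Matrix n n ℝ) : ℕ → Matrix n n ℝ
  | 0 => 0
  | k+1 => F (matIter F k)

lemma matIter_conv (F : Matrix n n ℝ → Matrix n n ℝ) (C : ℝ)
    (hnn : ∀ X, (∀ i j, 0 ≤ X i j) → ∀ i j, 0 ≤ F X i j)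
    (hmono : ∀ X Y, (∀ i j, 0 ≤ X i j) → (∀ i j, X i j ≤ Y i j) → ∀ i j, F X i j ≤ F Y i j)
    (hcont : ∀ (Xs : ℕ → Matrix n n ℝ) (X : Matrix n n ℝ),
      (∀ i j, Tendsto (fun k => Xs k i j) atTop (𝓝 (X i j))) →
      ∀ i j, Tendsto (fun k => F (Xs k) i j) atTop (𝓝 (F X i j)))
    (hbd : ∀ k i j, matIter F k i j ≤ C) :
    ∃ W : Matrix n n ℝ, (∀ i j, 0 ≤ W i j) ∧ (∀ k i j, matIter F k i j ≤ W i j) ∧ F W = W ∧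
      (∀ Z : Matrix n n ℝ, (∀ k i j, matIter F k i j ≤ Z i j) → ∀ i j, W i j ≤ Z i j) := by
  have hnniter : ∀ k i j, 0 ≤ matIter F k i j := by
    intro k
    induction k with
    | zero => intro i j; simp [matIter]
    | succ k ih => exact hnn _ ih
  have hmon : ∀ k i j, matIter F k i j ≤ matIter F (k+1) i j := by
    intro k
    induction k with
    | zero =>
      intro i j
      have : (0 : Matrix n n ℝ) i j ≤ F 0 i j := by
        simpa using hnn 0 (by simp) i j
      simpa [matIter] using this
    | succ k ih => exact hmono _ _ (hnniter k) ih
  have hmon' : ∀ i j, Monotone fun k => matIter F k i j :=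
    fun i j => monotone_nat_of_le_succ (fun k => hmon k i j)
  have hbdd : ∀ i j, BddAbove (Set.range fun k => matIter F k i j) := by
    intro i j
    refine ⟨C, ?_⟩
    rintro x ⟨k, rfl⟩
    exact hbd k i j
  set W : Matrix n n ℝ := Matrix.of (fun i j => ⨆ k, matIter F k i j) with hWdef
  have htend : ∀ i j, Tendsto (fun k => matIter F k i j) atTop (𝓝 (W i j)) :=
    fun i j => tendsto_atTop_ciSup (hmon' i j) (hbdd i j)
  have hle : ∀ k i j, matIter F k i j ≤ W i j := fun k i j => le_ciSup (hbdd i j) k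
  have hWnn : ∀ i j, 0 ≤ W i j := fun i j => le_trans (hnniter 0 i j) (hle 0 i j)
  have hfix : F W = W := by
    have h2 : ∀ i j, Tendsto (fun k => matIter F (k+1) i j) atTop (𝓝 (W i j)) :=
      fun i j => (htend i j).comp (tendsto_add_atTop_nat 1)
    have h3 := hcont _ W htend
    ext i j
    exact tendsto_nhds_unique (h3 i j) (h2 i j)
  refine ⟨W, hWnn, hle, hfix, ?_⟩
  intro Z hZ i j
  exact ciSup_le (fun k => hZ k i j)

lemma tendsF (A : ℕ → Matrix n n ℝ) (N : ℕ) (R : Matrix n n ℝ)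
    (Xs : ℕ → Matrix n n ℝ) (X : Matrix n n ℝ)
    (h : ∀ i j, Tendsto (fun k => Xs k i j) atTop (𝓝 (X i j))) :
    ∀ i j, Tendsto (fun k => ((∑ v ∈ Finset.range (N+1), A v * Xs k ^ v) + R) i j) atTop
      (𝓝 (((∑ v ∈ Finset.range (N+1), A v * X ^ v) + R) i j)) := by
  have hpow : ∀ v i j, Tendsto (fun k => (Xs k ^ v) i j) atTop (𝓝 ((X ^ v) i j)) := by
    intro v
    induction v with
    | zero => intro i j; simp only [pow_zero]; exact tendsto_const_nhds
    | succ v ih =>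
      intro i j
      simp only [pow_succ, Matrix.mul_apply]
      exact tendsto_finset_sum _ fun r _ => (ih i r).mul (h r j)
  intro i j
  simp only [Matrix.add_apply, Matrix.sum_apply, Matrix.mul_apply]
  exact Tendsto.add_const _ (tendsto_finset_sum _ fun v _ =>
    tendsto_finset_sum _ fun r _ => tendsto_const_nhds.mul (hpow v r j))

/-- max principle -/
lemma eig_const (Amat : Matrix n n ℝ) [Nonempty n]
    (h0 : ∀ i j, 0 ≤ Amat i j)
    (hrow : ∀ i, ∑ j, Amat i j = 1)
    (hirr : ∀ i j, ∃ k : ℕ, 0 < (Amat ^ k) i j)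
    (z : n → ℝ) (hz : Amat *ᵥ z = z) : ∀ i j, z i = z j := by
  obtain ⟨i₀, -, hmax⟩ := Finset.exists_max_image Finset.univ z ⟨Classical.arbitrary n, Finset.mem_univ _⟩
  have hmax' : ∀ a, z a ≤ z i₀ := fun a => hmax a (Finset.mem_univ a)
  have one_step : ∀ a b, 0 < Amat a b → z a = z i₀ → z b = z i₀ := by
    intro a b hab hza
    by_contra hne
    have hlt : z b < z i₀ := lt_of_le_of_ne (hmax' b) hne
    have h1 : z a = ∑ j, Amat a j * z j := by
      conv_lhs => rw [← hz]
      rfl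
    have h2 : ∑ j, Amat a j * z j < ∑ j, Amat a j * z i₀ := by
      apply Finset.sum_lt_sum
      · intro j _
        exact mul_le_mul_of_nonneg_left (hmax' j) (h0 a j)
      · exact ⟨b, Finset.mem_univ b, by exact mul_lt_mul_of_pos_left hlt hab⟩
    have h3 : ∑ j, Amat a j * z i₀ = z i₀ := by
      rw [← Finset.sum_mul, hrow, one_mul]
    rw [← h1, h3, hza] at h2
    exact lt_irrefl _ h2
  have n_step : ∀ k a b, 0 < (Amat ^ k) a b → z a = z i₀ → z b = z i₀ := by
    intro k
    induction k with
    | zero =>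
      intro a b hab hza
      rw [pow_zero, Matrix.one_apply] at hab
      by_cases hab' : a = b
      · rw [← hab']; exact hza
      · simp [hab'] at hab
    | succ k ih =>
      intro a b hab hza
      rw [pow_succ, Matrix.mul_apply] at hab
      have : ∃ r, 0 < (Amat ^ k) a r * Amat r b := by
        by_contra hcon
        push_neg at hcon
        have : ∑ r, (Amat ^ k) a r * Amat r b ≤ 0 := Finset.sum_nonpos fun r _ => hcon r
        linarith
      obtain ⟨r, hr⟩ := this
      have h4 : 0 < (Amat ^ k) a r ∧ 0 < Amat r b := by
        rcases mul_pos_iff.mp hr with h | h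
        · exact h
        · exact absurd h.1 (not_lt.mpr (pow_nn h0 k a r))
      exact one_step r b h4.2 (ih a r h4.1 hza)
  intro i j
  obtain ⟨ki, hki⟩ := hirr i₀ i
  obtain ⟨kj, hkj⟩ := hirr i₀ j
  rw [n_step ki i₀ i hki rfl, n_step kj i₀ j hkj rfl]

/-- Solvability of the Poisson equation -/
lemma poisson (Amat : Matrix n n ℝ) [Nonempty n]
    (h0 : ∀ i j, 0 ≤ Amat i j)
    (hrow : ∀ i, ∑ j, Amat i j = 1)
    (hirr : ∀ i j, ∃ k : ℕ, 0 < (Amat ^ k) i j)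
    (p : n → ℝ) (hpA : Matrix.vecMul p Amat = p) (hp1 : ∑ i, p i = 1)
    (w : n → ℝ) (hw : ∑ i, p i * w i = 0) :
    ∃ z : n → ℝ, ∀ i, z i - (Amat *ᵥ z) i = w i := by
  classical
  set e : n → ℝ := fun _ => 1 with he
  have hAe : Amat *ᵥ e = e := by
    funext i
    simp only [Matrix.mulVec, dotProduct, he, mul_one]
    exact hrow i
  set Mop : Matrix n n ℝ := 1 - Amat with hMop
  set Lmap : (n → ℝ) →ₗ[ℝ] (n → ℝ) := Matrix.mulVecLin Mop with hLmap
  have hker : LinearMap.ker Lmap = Submodule.span ℝ {e} := by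
    apply le_antisymm
    · intro z hzk
      have hz' : Mop *ᵥ z = 0 := hzk
      have hz : Amat *ᵥ z = z := by
        have := hz'
        rw [hMop, Matrix.sub_mulVec, Matrix.one_mulVec, sub_eq_zero] at this
        exact this.symm
      have hc := eig_const Amat h0 hrow hirr z hz
      rw [Submodule.mem_span_singleton]
      refine ⟨z (Classical.arbitrary n), ?_⟩
      funext i
      simp only [Pi.smul_apply, he, smul_eq_mul, mul_one]
      exact (hc i (Classical.arbitrary n)).symm ▸ rfl
    · rw [Submodule.span_le]
      intro x hx
      rw [Set.mem_singleton_iff] at hx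
      subst hx
      show Mop *ᵥ e = 0
      rw [hMop, Matrix.sub_mulVec, Matrix.one_mulVec, hAe, sub_self]
  set fp : (n → ℝ) →ₗ[ℝ] ℝ := ∑ i, p i • LinearMap.proj i with hfp
  have hfapp : ∀ x, fp x = ∑ i, p i * x i := by
    intro x
    rw [hfp]
    simp [LinearMap.sum_apply, LinearMap.proj]
  have hrange_le : LinearMap.range Lmap ≤ LinearMap.ker fp := by
    rintro x ⟨z, rfl⟩
    rw [LinearMap.mem_ker, hfapp]
    have : ∑ i, p i * (Lmap z) i = dotProduct p (Mop *ᵥ z) := rfl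
    rw [this, dotProduct_mulVec]
    have hvM : Matrix.vecMul p Mop = 0 := by
      rw [hMop, Matrix.vecMul_sub, Matrix.vecMul_one, hpA, sub_self]
    rw [hvM, zero_dotProduct]
  have hne : e ≠ 0 := by
    intro h
    have := congrFun h (Classical.arbitrary n)
    simp [he] at this
  have hk1 : Module.finrank ℝ (LinearMap.ker Lmap) = 1 := by
    rw [hker]
    exact finrank_span_singleton hne
  have hcard : Module.finrank ℝ (n → ℝ) = Fintype.card n := by
    simp [Module.finrank_pi]
  have hr1 : Module.finrank ℝ (LinearMap.range Lmap) = Fintype.card n - 1 := by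
    have := LinearMap.finrank_range_add_finrank_ker Lmap
    rw [hk1, hcard] at this
    omega
  have hfsurj : Function.Surjective fp := by
    intro r
    refine ⟨r • e, ?_⟩
    rw [LinearMap.map_smul, smul_eq_mul, hfapp]
    simp only [he, mul_one]
    rw [hp1, mul_one]
  have hkf : Module.finrank ℝ (LinearMap.ker fp) = Fintype.card n - 1 := by
    have h5 := LinearMap.finrank_range_add_finrank_ker fp
    rw [LinearMap.range_eq_top.mpr hfsurj, hcard] at h5
    have h6 : Module.finrank ℝ (⊤ : Submodule ℝ ℝ) = 1 := by
      rw [finrank_top]; exact Module.finrank_self ℝ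
    rw [h6] at h5
    omega
  have heq : LinearMap.range Lmap = LinearMap.ker fp :=
    Submodule.eq_of_le_of_finrank_eq hrange_le (by rw [hr1, hkf])
  have hwmem : w ∈ LinearMap.ker fp := by
    rw [LinearMap.mem_ker, hfapp]
    exact hw
  rw [← heq] at hwmem
  obtain ⟨z, hz⟩ := hwmem
  refine ⟨z, fun i => ?_⟩
  have : (Mop *ᵥ z) i = w i := by rw [show Mop *ᵥ z = Lmap z from rfl, hz]
  rw [hMop, Matrix.sub_mulVec, Matrix.one_mulVec] at this
  simpa using this

lemma small_delta (N : ℕ) (A : ℕ → Matrix n n ℝ) [Nonempty n]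
    (z β : n → ℝ) (ρ : ℝ) (hρ1 : ρ ≠ 1)
    (hstoch : ∀ i, ∑ v ∈ Finset.range (N+1), (A v *ᵥ (fun _ => (1:ℝ))) i = 1)
    (hβ : ∀ i, β i = ∑ v ∈ Finset.range (N+1), (v:ℝ) * (A v *ᵥ (fun _ => (1:ℝ))) i)
    (hz : ∀ i, z i - (∑ v ∈ Finset.range (N+1), (A v *ᵥ z) i) = β i - ρ) :
    ∃ δ : ℝ, (∀ j, 0 < 1 + δ * z j) ∧ (0 < 1 + δ) ∧
      (∀ i, ∑ v ∈ Finset.range (N+1), (1+δ)^v * ((A v *ᵥ (fun j => 1 + δ * z j)) i)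
        < (1+δ) * (1 + δ * z i)) := by
  classical
  set a : ℕ → n → ℝ := fun v i => (A v *ᵥ (fun _ => (1:ℝ))) i with ha
  set b : ℕ → n → ℝ := fun v i => (A v *ᵥ z) i with hb
  set φ : n → ℝ → ℝ := fun i δ =>
    (1+δ) * (1 + δ * z i) - ∑ v ∈ Finset.range (N+1), (1+δ)^v * (a v i + δ * b v i) with hφ
  have hmv : ∀ (v : ℕ) (δ : ℝ) (i : n),
      (A v *ᵥ (fun j => 1 + δ * z j)) i = a v i + δ * b v i := by
    intro v δ i
    have : (fun j => 1 + δ * z j) = (fun _ => (1:ℝ)) + δ • z := by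
      funext j; simp [smul_eq_mul]
    rw [this, Matrix.mulVec_add, Matrix.mulVec_smul]
    simp [ha, hb, smul_eq_mul]
  have hφ0 : ∀ i, φ i 0 = 0 := by
    intro i
    simp only [hφ]
    simp only [mul_zero, zero_mul, add_zero, mul_one, one_pow, one_mul, zero_add]
    rw [hstoch i]
    ring
  have hφd : ∀ i, HasDerivAt (φ i) (1 - ρ) 0 := by
    intro i
    have h1 : HasDerivAt (fun δ : ℝ => (1+δ) * (1 + δ * z i)) (1 + z i) 0 := by
      have ha1 : HasDerivAt (fun δ : ℝ => 1 + δ) 1 0 := by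
        simpa using (hasDerivAt_id (0:ℝ)).const_add 1
      have hb1 : HasDerivAt (fun δ : ℝ => 1 + δ * z i) (z i) 0 := by
        simpa using ((hasDerivAt_id (0:ℝ)).mul_const (z i)).const_add 1
      have := ha1.mul hb1
      norm_num at this
      exact this
    have h2 : HasDerivAt (fun δ : ℝ => ∑ v ∈ Finset.range (N+1), (1+δ)^v * (a v i + δ * b v i))
        (∑ v ∈ Finset.range (N+1), ((v:ℝ) * a v i + b v i)) 0 := by
      apply HasDerivAt.fun_sum
      intro v _
      have hp : HasDerivAt (fun δ : ℝ => (1+δ)^v) (v:ℝ) 0 := by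
        have ha1 : HasDerivAt (fun δ : ℝ => 1 + δ) 1 0 := by
          simpa using (hasDerivAt_id (0:ℝ)).const_add 1
        have := ha1.pow v
        norm_num at this
        exact this
      have hq : HasDerivAt (fun δ : ℝ => a v i + δ * b v i) (b v i) 0 := by
        simpa using ((hasDerivAt_id (0:ℝ)).mul_const (b v i)).const_add (a v i)
      have := hp.mul hq
      norm_num at this
      exact this
    have h3 := h1.sub h2
    have h4 : (1 + z i) - (∑ v ∈ Finset.range (N+1), ((v:ℝ) * a v i + b v i)) = 1 - ρ := by
      rw [Finset.sum_add_distrib]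
      have h5 : ∑ v ∈ Finset.range (N+1), (v:ℝ) * a v i = β i := (hβ i).symm
      have h6 : z i - (∑ v ∈ Finset.range (N+1), b v i) = β i - ρ := hz i
      linarith
    rw [h4] at h3
    exact h3
  have main : ∀ l : Filter ℝ, l ≤ 𝓝[≠] (0:ℝ) →
      (∀ i, ∀ᶠ δ in l, 0 < slope (φ i) 0 δ * δ) →
      (∀ᶠ δ in l, (∀ j, 0 < 1 + δ * z j) ∧ (0 < 1 + δ) ∧ ∀ i, 0 < φ i δ) := by
    intro l hl hslope
    have hne : ∀ᶠ δ in l, δ ≠ 0 := by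
      apply hl
      exact self_mem_nhdsWithin
    have hphi : ∀ i, ∀ᶠ δ in l, 0 < φ i δ := by
      intro i
      filter_upwards [hslope i, hne] with δ h1 h2
      have he1 : slope (φ i) 0 δ * δ = φ i δ := by
        rw [slope_def_field]
        field_simp [hφ0 i]
        rw [hφ0 i]; ring
      linarith [he1 ▸ h1]
    have hu : ∀ j, ∀ᶠ δ in l, 0 < 1 + δ * z j := by
      intro j
      have ht : Tendsto (fun δ : ℝ => 1 + δ * z j) l (𝓝 (1:ℝ)) := by
        have hc : Continuous (fun δ : ℝ => 1 + δ * z j) := by continuity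
        have := (hc.tendsto 0).mono_left (hl.trans nhdsWithin_le_nhds)
        simpa using this
      exact ht.eventually (eventually_gt_nhds one_pos)
    have hc : ∀ᶠ δ in l, 0 < 1 + δ := by
      have ht : Tendsto (fun δ : ℝ => 1 + δ) l (𝓝 (1:ℝ)) := by
        have hc : Continuous (fun δ : ℝ => 1 + δ) := by continuity
        have := (hc.tendsto 0).mono_left (hl.trans nhdsWithin_le_nhds)
        simpa using this
      exact ht.eventually (eventually_gt_nhds one_pos)
    have hall_u : ∀ᶠ δ in l, ∀ j, 0 < 1 + δ * z j := by
      rw [Filter.eventually_all]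
      exact hu
    have hall_φ : ∀ᶠ δ in l, ∀ i, 0 < φ i δ := by
      rw [Filter.eventually_all]
      exact hphi
    filter_upwards [hall_u, hc, hall_φ] with δ h1 h2 h3
    exact ⟨h1, h2, h3⟩
  have key : ∃ δ : ℝ, (∀ j, 0 < 1 + δ * z j) ∧ (0 < 1 + δ) ∧ ∀ i, 0 < φ i δ := by
    rcases lt_or_gt_of_ne hρ1 with hlt | hgt
    · have hsl : ∀ i, ∀ᶠ δ in 𝓝[>] (0:ℝ), 0 < slope (φ i) 0 δ * δ := by
        intro i
        have h1 : Tendsto (slope (φ i) 0) (𝓝[≠] 0) (𝓝 (1 - ρ)) :=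
          hasDerivAt_iff_tendsto_slope.mp (hφd i)
        have h2 : Tendsto (slope (φ i) 0) (𝓝[>] 0) (𝓝 (1 - ρ)) :=
          h1.mono_left (nhdsWithin_mono _ (fun x hx => ne_of_gt hx))
        have h3 : ∀ᶠ δ in 𝓝[>] (0:ℝ), 0 < slope (φ i) 0 δ :=
          h2.eventually (eventually_gt_nhds (by linarith))
        filter_upwards [h3, self_mem_nhdsWithin] with δ hδ1 hδ2
        exact mul_pos hδ1 hδ2
      exact (main (𝓝[>] (0:ℝ)) (nhdsWithin_mono _ (fun x hx => ne_of_gt hx)) hsl).exists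
    · have hsl : ∀ i, ∀ᶠ δ in 𝓝[<] (0:ℝ), 0 < slope (φ i) 0 δ * δ := by
        intro i
        have h1 : Tendsto (slope (φ i) 0) (𝓝[≠] 0) (𝓝 (1 - ρ)) :=
          hasDerivAt_iff_tendsto_slope.mp (hφd i)
        have h2 : Tendsto (slope (φ i) 0) (𝓝[<] 0) (𝓝 (1 - ρ)) :=
          h1.mono_left (nhdsWithin_mono _ (fun x hx => ne_of_lt hx))
        have h3 : ∀ᶠ δ in 𝓝[<] (0:ℝ), slope (φ i) 0 δ < 0 :=
          h2.eventually (eventually_lt_nhds (by linarith))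
        filter_upwards [h3, self_mem_nhdsWithin] with δ hδ1 hδ2
        exact mul_pos_of_neg_of_neg hδ1 hδ2
      exact (main (𝓝[<] (0:ℝ)) (nhdsWithin_mono _ (fun x hx => ne_of_lt hx)) hsl).exists
  obtain ⟨δ, h1, h2, h3⟩ := key
  refine ⟨δ, h1, h2, fun i => ?_⟩
  have h4 := h3 i
  rw [hφ] at h4
  simp only [sub_pos] at h4
  calc ∑ v ∈ Finset.range (N+1), (1+δ)^v * ((A v *ᵥ (fun j => 1 + δ * z j)) i)
      = ∑ v ∈ Finset.range (N+1), (1+δ)^v * (a v i + δ * b v i) := by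
        refine Finset.sum_congr rfl fun v _ => ?_
        rw [hmv]
    _ < (1+δ) * (1 + δ * z i) := h4

lemma kron_vec_entry (P Q Z : Matrix n n ℝ) (q : n × n) :
    ((Pᵀ ⊗ₖ Q) *ᵥ (fun r => Z r.2 r.1)) q = (Q * Z * P) q.2 q.1 := by
  obtain ⟨q1, q2⟩ := q
  simp only [Matrix.mulVec, dotProduct, Fintype.sum_prod_type,
    Matrix.kroneckerMap_apply, Matrix.transpose_apply, Matrix.mul_apply,
    Finset.sum_mul, Finset.mul_sum]
  refine Finset.sum_congr rfl fun r1 _ => ?_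
  refine Finset.sum_congr rfl fun r2 _ => ?_
  ring

lemma specRad_lt_one {q : Type*} [Fintype q] [DecidableEq q] [Nonempty q]
    (B : Matrix q q ℝ) (hB0 : ∀ i j, 0 ≤ B i j)
    (k : ℕ) (hrow : ∀ i, ∑ j, (B ^ (k+1)) i j < 1) :
    specRad B < ENNReal.ofReal 1 := by
  classical
  letI : SeminormedRing (Matrix q q ℂ) := Matrix.linftyOpSemiNormedRing
  letI : NormedRing (Matrix q q ℂ) := Matrix.linftyOpNormedRing
  letI : NormedAlgebra ℂ (Matrix q q ℂ) := Matrix.linftyOpNormedAlgebra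
  letI : NormOneClass (Matrix q q ℂ) := Matrix.linfty_opNormOneClass
  haveI : CompleteSpace (Matrix q q ℂ) := FiniteDimensional.complete ℂ _
  set C : Matrix q q ℂ := B.map (algebraMap ℝ ℂ) with hC
  have hpowC : C ^ (k+1) = (B ^ (k+1)).map (algebraMap ℝ ℂ) := by
    have h1 : C = (algebraMap ℝ ℂ).mapMatrix B := rfl
    have h2 : (B ^ (k+1)).map (algebraMap ℝ ℂ) = (algebraMap ℝ ℂ).mapMatrix (B ^ (k+1)) := rfl
    rw [h1, h2, map_pow]
  have hBk0 : ∀ i j, 0 ≤ (B ^ (k+1)) i j := pow_nn hB0 (k+1)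
  have hnn : ‖C ^ (k+1)‖₊ < 1 := by
    rw [hpowC, Matrix.linfty_opNNNorm_def]
    rw [Finset.sup_lt_iff (by norm_num : (⊥ : NNReal) < 1)]
    intro i _
    have he : ∀ j, ‖((B ^ (k+1)).map (algebraMap ℝ ℂ)) i j‖₊ = ‖(B ^ (k+1)) i j‖₊ := by
      intro j
      simp only [Matrix.map_apply]
      exact Complex.nnnorm_real _
    rw [Finset.sum_congr rfl (fun j _ => he j)]
    rw [← NNReal.coe_lt_coe]
    push_cast
    calc ∑ j, ‖(B ^ (k+1)) i j‖ = ∑ j, (B ^ (k+1)) i j :=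
          Finset.sum_congr rfl fun j _ => Real.norm_of_nonneg (hBk0 i j)
      _ < 1 := hrow i
  have hle := spectrum.spectralRadius_le_pow_nnnorm_pow_one_div ℂ C k
  have hone : ‖(1 : Matrix q q ℂ)‖₊ = 1 := nnnorm_one
  rw [hone] at hle
  have h2 : ((1:NNReal) : ℝ≥0∞) ^ (1 / (k+1) : ℝ) = 1 := by
    rw [ENNReal.coe_one, ENNReal.one_rpow]
  rw [h2, mul_one] at hle
  have h3 : ((‖C ^ (k+1)‖₊ : ℝ≥0∞)) ^ (1 / (k+1) : ℝ) < 1 := by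
    apply ENNReal.rpow_lt_one
    · exact_mod_cast hnn
    · positivity
  have hfin : spectralRadius ℂ C < 1 := lt_of_le_of_lt hle h3
  rw [show specRad B = spectralRadius ℂ C from rfl]
  rw [ENNReal.ofReal_one]
  exact hfin

end MGAux
theorem stmt0 (m N : ℕ) (hm : 1 ≤ m) (hN : 1 ≤ N)
    (A : ℕ → Matrix (Fin m) (Fin m) ℝ)
    (hA : ∀ v, v ≤ N → ∀ i j, 0 ≤ A v i j)
    (hstoch : ∀ i, ∑ j, (∑ v ∈ Finset.range (N + 1), A v) i j = 1)
    (hirr : ∀ i j, ∃ n : ℕ, 0 < ((∑ v ∈ Finset.range (N + 1), A v) ^ n) i j)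
    (p : Fin m → ℝ) (hp0 : ∀ i, 0 ≤ p i)
    (hpA : Matrix.vecMul p (∑ v ∈ Finset.range (N + 1), A v) = p)
    (hp1 : ∑ i, p i = 1)
    (β : Fin m → ℝ)
    (hβ : β = ∑ v ∈ Finset.Icc 1 N, (v : ℝ) • (A v *ᵥ (fun _ => (1 : ℝ))))
    (ρ : ℝ) (hρ : ρ = ∑ i, p i * β i) (hρ1 : ρ ≠ 1)
    (G : Matrix (Fin m) (Fin m) ℝ)
    (hG0 : ∀ i j, 0 ≤ G i j)
    (hGsol : ∑ v ∈ Finset.range (N + 1), A v * G ^ v = G)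
    (hGmin : ∀ S : Matrix (Fin m) (Fin m) ℝ, (∀ i j, 0 ≤ S i j) →
      ∑ v ∈ Finset.range (N + 1), A v * S ^ v = S → ∀ i j, G i j ≤ S i j)
    :
    IsNonsingMMatrix
      ((1 : Matrix (Fin m × Fin m) (Fin m × Fin m) ℝ) -
      ∑ v ∈ Finset.Icc 1 N, ∑ j ∈ Finset.range v,
        (G ^ (v - 1 - j))ᵀ ⊗ₖ (A v * G ^ j)) := by
  classical
  open MGAux Filter in
  open scoped Topology in
  haveI hne : Nonempty (Fin m) := ⟨⟨0, hm⟩⟩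
  set Amat : Matrix (Fin m) (Fin m) ℝ := ∑ v ∈ Finset.range (N + 1), A v with hAmatdef
  have hA0 : ∀ v ∈ Finset.range (N+1), ∀ i j, (0:ℝ) ≤ A v i j := by
    intro v hv
    exact hA v (by have := Finset.mem_range.mp hv; omega)
  have hAmat0 : ∀ i j, 0 ≤ Amat i j := by
    intro i j
    rw [hAmatdef, Matrix.sum_apply]
    exact Finset.sum_nonneg fun v hv => hA0 v hv i j
  have hins : Finset.range (N+1) = insert 0 (Finset.Icc 1 N) := by
    ext x
    simp only [Finset.mem_range, Finset.mem_insert, Finset.mem_Icc]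
    omega
  have h0notin : (0:ℕ) ∉ Finset.Icc 1 N := by simp
  -- row sums as mulVec facts
  have hrowsum : ∀ i, ∑ v ∈ Finset.range (N+1), (A v *ᵥ (fun _ => (1:ℝ))) i = 1 := by
    intro i
    have h1 : ∀ v, (A v *ᵥ (fun _ => (1:ℝ))) i = ∑ j, A v i j := by
      intro v
      simp [Matrix.mulVec, dotProduct]
    rw [Finset.sum_congr rfl fun v _ => h1 v, Finset.sum_comm]
    have h2 : ∀ j, ∑ v ∈ Finset.range (N+1), A v i j = Amat i j := by
      intro j
      rw [hAmatdef, Matrix.sum_apply]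
    rw [Finset.sum_congr rfl fun j _ => h2 j]
    exact hstoch i
  have hβ' : ∀ i, β i = ∑ v ∈ Finset.range (N+1), (v:ℝ) * (A v *ᵥ (fun _ => (1:ℝ))) i := by
    intro i
    rw [hins, Finset.sum_insert h0notin]
    simp only [Nat.cast_zero, zero_mul, zero_add]
    rw [hβ]
    rw [Finset.sum_apply]
    refine Finset.sum_congr rfl fun v _ => ?_
    simp [smul_eq_mul]
  -- Poisson equation
  have hw0 : ∑ i, p i * (β i - ρ) = 0 := by
    have h1 : ∑ i, p i * (β i - ρ) = (∑ i, p i * β i) - (∑ i, p i) * ρ := by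
      rw [Finset.sum_mul]
      rw [← Finset.sum_sub_distrib]
      refine Finset.sum_congr rfl fun i _ => ?_
      ring
    rw [h1, hp1, hρ]
    ring
  obtain ⟨z, hz⟩ := poisson Amat hAmat0 hstoch hirr p hpA hp1 (fun i => β i - ρ) hw0
  have hAmatz : ∀ i, (Amat *ᵥ z) i = ∑ v ∈ Finset.range (N+1), (A v *ᵥ z) i := by
    intro i
    rw [hAmatdef, MGAux.sum_mulVec]
    rw [Finset.sum_apply]
  have hz' : ∀ i, z i - (∑ v ∈ Finset.range (N+1), (A v *ᵥ z) i) = β i - ρ := by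
    intro i
    rw [← hAmatz i]
    exact hz i
  -- small delta
  obtain ⟨δ, hupos, hcpos, hkey⟩ := small_delta N A z β ρ hρ1 hrowsum hβ' hz'
  set u : Fin m → ℝ := fun j => 1 + δ * z j with hudef
  set c : ℝ := 1 + δ with hcdef
  -- slack and epsilon
  set slack : Fin m → ℝ := fun i => c * u i - ∑ v ∈ Finset.range (N+1), c^v * ((A v *ᵥ u) i)
    with hslackdef
  have hslack : ∀ i, 0 < slack i := by
    intro i
    have h := hkey i
    have hu_i : u i = 1 + δ * z i := rfl
    simp only [hslackdef]
    rw [hu_i]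
    linarith
  set smin : ℝ := Finset.univ.inf' Finset.univ_nonempty slack with hsmindef
  have hsmin : 0 < smin := by
    rw [hsmindef, Finset.lt_inf'_iff]
    exact fun i _ => hslack i
  have hsmin_le : ∀ i, smin ≤ slack i := fun i => Finset.inf'_le _ (Finset.mem_univ i)
  set usum : ℝ := ∑ j, u j with husumdef
  have husum : 0 < usum := Finset.sum_pos (fun j _ => hupos j) Finset.univ_nonempty
  set ε : ℝ := smin / usum with hεdef
  have hε : 0 < ε := div_pos hsmin husum
  have hεusum : ε * usum = smin := div_mul_cancel₀ _ (ne_of_gt husum)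
  have hkey2 : ∀ i, (∑ v ∈ Finset.range (N+1), c^v * ((A v *ᵥ u) i)) + ε * usum ≤ c * u i := by
    intro i
    rw [hεusum]
    have h1 := hsmin_le i
    simp only [hslackdef] at h1
    linarith
  -- the perturbed fixed point iteration
  set R : Matrix (Fin m) (Fin m) ℝ := Matrix.of (fun _ _ => ε) with hRdef
  have hR0 : ∀ i j, 0 ≤ R i j := fun i j => hε.le
  have hRu : ∀ i, (R *ᵥ u) i = ε * usum := by
    intro i
    simp only [hRdef, Matrix.mulVec, dotProduct, Matrix.of_apply, husumdef]
    rw [Finset.mul_sum]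
  set F1 : Matrix (Fin m) (Fin m) ℝ → Matrix (Fin m) (Fin m) ℝ :=
    fun X => (∑ v ∈ Finset.range (N+1), A v * X ^ v) + R with hF1def
  have hnn1 : ∀ X, (∀ i j, 0 ≤ X i j) → ∀ i j, 0 ≤ F1 X i j := by
    intro X hX i j
    simp only [hF1def, Matrix.add_apply, Matrix.sum_apply]
    have h1 : 0 ≤ ∑ v ∈ Finset.range (N+1), (A v * X ^ v) i j :=
      Finset.sum_nonneg fun v hv => mul_nn (hA0 v hv) (pow_nn hX v) i j
    have h2 : (0:ℝ) ≤ R i j := hR0 i j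
    linarith
  have hmono1 : ∀ X Y, (∀ i j, 0 ≤ X i j) → (∀ i j, X i j ≤ Y i j) →
      ∀ i j, F1 X i j ≤ F1 Y i j := by
    intro X Y hX hXY i j
    simp only [hF1def, Matrix.add_apply, Matrix.sum_apply]
    have h1 : ∑ v ∈ Finset.range (N+1), (A v * X ^ v) i j
        ≤ ∑ v ∈ Finset.range (N+1), (A v * Y ^ v) i j := by
      refine Finset.sum_le_sum fun v hv => ?_
      have h2 : ∀ a b, (X ^ v) a b ≤ (Y ^ v) a b := pow_le_pow hX hXY v
      exact mul_le_left (hA0 v hv) h2 i j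
    linarith
  have hcont1 : ∀ (Xs : ℕ → Matrix (Fin m) (Fin m) ℝ) (X : Matrix (Fin m) (Fin m) ℝ),
      (∀ i j, Tendsto (fun k => Xs k i j) atTop (𝓝 (X i j))) →
      ∀ i j, Tendsto (fun k => F1 (Xs k) i j) atTop (𝓝 (F1 X i j)) := by
    intro Xs X h
    exact tendsF A N R Xs X h
  -- the invariant
  have hXinv : ∀ k, (∀ i j, 0 ≤ matIter F1 k i j) ∧ (∀ i, (matIter F1 k *ᵥ u) i ≤ c * u i) := by
    intro k
    induction k with
    | zero =>
      constructor
      · intro i j; simp [matIter]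
      · intro i
        have : (matIter F1 0 *ᵥ u) i = 0 := by simp [matIter, Matrix.zero_mulVec]
        rw [this]
        have h1 : (0:ℝ) < u i := hupos i
        exact mul_nonneg hcpos.le h1.le
    | succ k ih =>
      obtain ⟨ih0, ihu⟩ := ih
      have hXk1 : matIter F1 (k+1) = F1 (matIter F1 k) := rfl
      constructor
      · intro i j
        rw [hXk1]
        exact hnn1 _ ih0 i j
      · intro i
        rw [hXk1]
        have hsplit : (F1 (matIter F1 k) *ᵥ u) i
            = ((∑ v ∈ Finset.range (N+1), A v * matIter F1 k ^ v) *ᵥ u) i + (R *ᵥ u) i := by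
          simp only [hF1def]
          rw [Matrix.add_mulVec]
          simp [Pi.add_apply]
        rw [hsplit, hRu i]
        have hsum : ((∑ v ∈ Finset.range (N+1), A v * matIter F1 k ^ v) *ᵥ u) i
            = ∑ v ∈ Finset.range (N+1), ((A v * matIter F1 k ^ v) *ᵥ u) i := by
          rw [MGAux.sum_mulVec, Finset.sum_apply]
        rw [hsum]
        have hterm : ∀ v ∈ Finset.range (N+1),
            ((A v * matIter F1 k ^ v) *ᵥ u) i ≤ c^v * ((A v *ᵥ u) i) := by
          intro v hv
          have h1 : (A v * matIter F1 k ^ v) *ᵥ u = A v *ᵥ (matIter F1 k ^ v *ᵥ u) := by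
            rw [Matrix.mulVec_mulVec]
          rw [h1]
          have h2 : ∀ j, (matIter F1 k ^ v *ᵥ u) j ≤ c^v * u j :=
            pow_mulVec_le ih0 hcpos.le ihu v
          calc (A v *ᵥ (matIter F1 k ^ v *ᵥ u)) i ≤ (A v *ᵥ (c^v • u)) i :=
                mulVec_mono (hA0 v hv) (fun j => by simpa using h2 j) i
            _ = c^v * ((A v *ᵥ u) i) := by rw [Matrix.mulVec_smul]; simp
        calc (∑ v ∈ Finset.range (N+1), ((A v * matIter F1 k ^ v) *ᵥ u) i) + ε * usum
            ≤ (∑ v ∈ Finset.range (N+1), c^v * ((A v *ᵥ u) i)) + ε * usum := by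
              have := Finset.sum_le_sum hterm
              linarith
          _ ≤ c * u i := hkey2 i
  -- entrywise bound
  set umin : ℝ := Finset.univ.inf' Finset.univ_nonempty u with humindef
  have humin : 0 < umin := by
    rw [humindef, Finset.lt_inf'_iff]
    exact fun j _ => hupos j
  have humin_le : ∀ j, umin ≤ u j := fun j => Finset.inf'_le _ (Finset.mem_univ j)
  have husum_le : ∀ i, u i ≤ usum := by
    intro i
    rw [husumdef]
    exact Finset.single_le_sum (fun j _ => (hupos j).le) (Finset.mem_univ i)
  set Cb : ℝ := c * usum / umin with hCbdef
  have hbd1 : ∀ k i j, matIter F1 k i j ≤ Cb := by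
    intro k i j
    obtain ⟨h0, hu'⟩ := hXinv k
    have h1 : matIter F1 k i j * u j ≤ c * u i := by
      have h2 : matIter F1 k i j * u j ≤ (matIter F1 k *ᵥ u) i := by
        have : (matIter F1 k *ᵥ u) i = ∑ j', matIter F1 k i j' * u j' := rfl
        rw [this]
        exact Finset.single_le_sum (f := fun j' => matIter F1 k i j' * u j')
          (fun j' _ => mul_nonneg (h0 i j') (hupos j').le) (Finset.mem_univ j)
      exact le_trans h2 (hu' i)
    rw [hCbdef, le_div_iff₀ humin]
    calc matIter F1 k i j * umin ≤ matIter F1 k i j * u j :=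
          mul_le_mul_of_nonneg_left (humin_le j) (h0 i j)
      _ ≤ c * u i := h1
      _ ≤ c * usum := mul_le_mul_of_nonneg_left (husum_le i) hcpos.le
  obtain ⟨W, hW0, hXleW, hWfix, hWmin⟩ := matIter_conv F1 Cb hnn1 hmono1 hcont1 hbd1
  have hWC : ∀ i j, W i j ≤ Cb := by
    intro i j
    exact hWmin (Matrix.of fun _ _ => Cb) (fun k a b => hbd1 k a b) i j
  -- the unperturbed iteration
  set F0 : Matrix (Fin m) (Fin m) ℝ → Matrix (Fin m) (Fin m) ℝ :=
    fun X => (∑ v ∈ Finset.range (N+1), A v * X ^ v) + (0 : Matrix (Fin m) (Fin m) ℝ)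
    with hF0def
  have hnn0 : ∀ X, (∀ i j, 0 ≤ X i j) → ∀ i j, 0 ≤ F0 X i j := by
    intro X hX i j
    simp only [hF0def, Matrix.add_apply, Matrix.sum_apply, Matrix.zero_apply, add_zero]
    exact Finset.sum_nonneg fun v hv => mul_nn (hA0 v hv) (pow_nn hX v) i j
  have hmono0 : ∀ X Y, (∀ i j, 0 ≤ X i j) → (∀ i j, X i j ≤ Y i j) →
      ∀ i j, F0 X i j ≤ F0 Y i j := by
    intro X Y hX hXY i j
    simp only [hF0def, Matrix.add_apply, Matrix.sum_apply, Matrix.zero_apply, add_zero]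
    refine Finset.sum_le_sum fun v hv => ?_
    exact mul_le_left (hA0 v hv) (pow_le_pow hX hXY v) i j
  have hcont0 : ∀ (Xs : ℕ → Matrix (Fin m) (Fin m) ℝ) (X : Matrix (Fin m) (Fin m) ℝ),
      (∀ i j, Tendsto (fun k => Xs k i j) atTop (𝓝 (X i j))) →
      ∀ i j, Tendsto (fun k => F0 (Xs k) i j) atTop (𝓝 (F0 X i j)) := by
    intro Xs X h
    exact tendsF A N 0 Xs X h
  have hY0 : ∀ k i j, 0 ≤ matIter F0 k i j := by
    intro k
    induction k with
    | zero => intro i j; simp [matIter]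
    | succ k ih => exact hnn0 _ ih
  have hYleW : ∀ k i j, matIter F0 k i j ≤ W i j := by
    intro k
    induction k with
    | zero => intro i j; simpa [matIter] using hW0 i j
    | succ k ih =>
      intro i j
      have h1 : matIter F0 (k+1) = F0 (matIter F0 k) := rfl
      rw [h1]
      have h2 : F0 (matIter F0 k) i j ≤ F0 W i j := hmono0 _ _ (hY0 k) ih i j
      have h3 : F0 W i j ≤ F1 W i j := by
        simp only [hF0def, hF1def, Matrix.add_apply, Matrix.zero_apply, add_zero]
        have := hR0 i j
        linarith
      rw [hWfix] at h3
      linarith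
  obtain ⟨Ys, hYs0, hYsle, hYsfix, hYsmin⟩ := matIter_conv F0 Cb hnn0 hmono0 hcont0
    (fun k i j => le_trans (hYleW k i j) (hWC i j))
  have hYsW : ∀ i j, Ys i j ≤ W i j := hYsmin W hYleW
  have hYsol : ∑ v ∈ Finset.range (N + 1), A v * Ys ^ v = Ys := by
    have := hYsfix
    simp only [hF0def, add_zero] at this
    exact this
  have hGW : ∀ i j, G i j ≤ W i j := fun i j =>
    le_trans (hGmin Ys hYs0 hYsol i j) (hYsW i j)
  -- the derivative inequality : LD + ε ≤ D entrywise
  set D : Matrix (Fin m) (Fin m) ℝ := W - G with hDdef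
  have hD0 : ∀ i j, 0 ≤ D i j := by
    intro i j
    simp only [hDdef, Matrix.sub_apply]
    linarith [hGW i j]
  have hFWR : ∀ i j, (∑ v ∈ Finset.range (N+1), A v * W ^ v) i j + ε = W i j := by
    intro i j
    have h1 := congrFun (congrFun hWfix i) j
    simp only [hF1def, Matrix.add_apply, hRdef, Matrix.of_apply] at h1
    exact h1
  have hsa2 : ∀ i j, (∑ v ∈ Finset.range (N+1), A v * G ^ v) i j
      + (∑ v ∈ Finset.range (N+1), A v * (∑ t ∈ Finset.range v, G ^ t * (W - G) * G ^ (v - 1 - t))) i j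
      ≤ (∑ v ∈ Finset.range (N+1), A v * W ^ v) i j := by
    intro i j
    simp only [Matrix.sum_apply]
    rw [← Finset.sum_add_distrib]
    refine Finset.sum_le_sum fun v hv => ?_
    have h1 : ∀ a b, (G ^ v + (∑ t ∈ Finset.range v, G ^ t * (W - G) * G ^ (v - 1 - t))) a b
        ≤ (W ^ v) a b := by
      intro a b
      rw [Matrix.add_apply]
      exact superadd hG0 hGW v a b
    have h2 := mul_le_left (hA0 v hv) h1 i j
    rw [Matrix.mul_add] at h2
    rw [Matrix.add_apply] at h2
    exact h2
  have hDD : ∀ i j,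
      (∑ v ∈ Finset.range (N+1), A v * (∑ t ∈ Finset.range v, G ^ t * (W - G) * G ^ (v - 1 - t))) i j
      + ε ≤ D i j := by
    intro i j
    have h1 := hsa2 i j
    have h2 := hFWR i j
    have h3 : (∑ v ∈ Finset.range (N+1), A v * G ^ v) i j = G i j := by rw [hGsol]
    simp only [hDdef, Matrix.sub_apply]
    linarith
  -- rewrite the LD sum in Kronecker-compatible form over Icc 1 N
  have hLDform : (∑ v ∈ Finset.range (N+1), A v * (∑ t ∈ Finset.range v, G ^ t * (W - G) * G ^ (v - 1 - t)))
      = ∑ v ∈ Finset.Icc 1 N, ∑ t ∈ Finset.range v, (A v * G ^ t) * (W - G) * G ^ (v - 1 - t) := by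
    rw [hins, Finset.sum_insert h0notin]
    have h1 : A 0 * (∑ t ∈ Finset.range 0, G ^ t * (W - G) * G ^ (0 - 1 - t)) = 0 := by
      simp
    rw [h1, zero_add]
    refine Finset.sum_congr rfl fun v _ => ?_
    rw [Finset.mul_sum]
    refine Finset.sum_congr rfl fun t _ => ?_
    rw [← mul_assoc, ← mul_assoc]
  -- the Kronecker matrix
  set Bmat : Matrix (Fin m × Fin m) (Fin m × Fin m) ℝ :=
    ∑ v ∈ Finset.Icc 1 N, ∑ t ∈ Finset.range v, (G ^ (v - 1 - t))ᵀ ⊗ₖ (A v * G ^ t) with hBmatdef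
  have hB0 : ∀ q r, 0 ≤ Bmat q r := by
    intro q r
    simp only [hBmatdef, Matrix.sum_apply]
    refine Finset.sum_nonneg fun v hv => Finset.sum_nonneg fun t _ => ?_
    have hv' : v ∈ Finset.range (N+1) := by
      rw [hins]
      exact Finset.mem_insert_of_mem hv
    have h1 : 0 ≤ (G ^ (v-1-t))ᵀ q.1 r.1 := pow_nn hG0 (v-1-t) r.1 q.1
    have h2 : 0 ≤ (A v * G ^ t) q.2 r.2 := mul_nn (hA0 v hv') (pow_nn hG0 t) q.2 r.2
    rw [Matrix.kroneckerMap_apply]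
    exact mul_nonneg h1 h2
  have hBvec : ∀ Z : Matrix (Fin m) (Fin m) ℝ, ∀ q : Fin m × Fin m,
      (Bmat *ᵥ (fun r => Z r.2 r.1)) q
      = (∑ v ∈ Finset.Icc 1 N, ∑ t ∈ Finset.range v, (A v * G ^ t) * Z * G ^ (v - 1 - t)) q.2 q.1 := by
    intro Z q
    rw [hBmatdef, MGAux.sum_mulVec, Finset.sum_apply]
    rw [Matrix.sum_apply]
    refine Finset.sum_congr rfl fun v _ => ?_
    rw [MGAux.sum_mulVec, Finset.sum_apply, Matrix.sum_apply]
    refine Finset.sum_congr rfl fun t _ => ?_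
    exact kron_vec_entry (G ^ (v-1-t)) (A v * G ^ t) Z q
  -- the series argument
  set x0 : Fin m × Fin m → ℝ := fun _ => ε with hx0def
  set d : Fin m × Fin m → ℝ := fun r => D r.2 r.1 with hddef
  have hd0 : ∀ r, 0 ≤ d r := fun r => hD0 r.2 r.1
  have hstep : ∀ q, (Bmat *ᵥ d) q + ε ≤ d q := by
    intro q
    have h1 : (Bmat *ᵥ d) q
        = (∑ v ∈ Finset.Icc 1 N, ∑ t ∈ Finset.range v, (A v * G ^ t) * D * G ^ (v - 1 - t)) q.2 q.1 :=
      hBvec D q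
    rw [h1]
    have h2 := hDD q.2 q.1
    rw [hLDform] at h2
    simp only [hDdef] at h2 ⊢
    exact h2
  have hpart : ∀ nn q, (∑ k ∈ Finset.range nn, (Bmat ^ k) *ᵥ x0) q ≤ d q := by
    intro nn
    induction nn with
    | zero =>
      intro q
      simp only [Finset.range_zero, Finset.sum_empty, Pi.zero_apply]
      exact hd0 q
    | succ nn ih =>
      intro q
      have h1 : (∑ k ∈ Finset.range (nn+1), (Bmat ^ k) *ᵥ x0)
          = x0 + Bmat *ᵥ (∑ k ∈ Finset.range nn, (Bmat ^ k) *ᵥ x0) := by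
        rw [Finset.sum_range_succ']
        rw [mulVec_sum_vec]
        rw [add_comm]
        congr 1
        · simp [Matrix.one_mulVec]
        · refine Finset.sum_congr rfl fun k _ => ?_
          rw [pow_succ', ← Matrix.mulVec_mulVec]
      rw [h1]
      have h2 : (Bmat *ᵥ (∑ k ∈ Finset.range nn, (Bmat ^ k) *ᵥ x0)) q ≤ (Bmat *ᵥ d) q :=
        mulVec_mono hB0 ih q
      have h3 := hstep q
      have h4 : (x0 + Bmat *ᵥ (∑ k ∈ Finset.range nn, (Bmat ^ k) *ᵥ x0)) q
          = ε + (Bmat *ᵥ (∑ k ∈ Finset.range nn, (Bmat ^ k) *ᵥ x0)) q := rfl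
      rw [h4]
      linarith
  have hterm_nn : ∀ k q, 0 ≤ ((Bmat ^ k) *ᵥ x0) q := by
    intro k q
    exact mulVec_nn (pow_nn hB0 k) (fun _ => hε.le) q
  have htend0 : ∀ q, Tendsto (fun k => ((Bmat ^ k) *ᵥ x0) q) atTop (𝓝 0) := by
    intro q
    set s : ℕ → ℝ := fun nn => (∑ k ∈ Finset.range nn, (Bmat ^ k) *ᵥ x0) q with hsdef
    have hsq : ∀ nn, s (nn+1) = s nn + ((Bmat ^ nn) *ᵥ x0) q := by
      intro nn
      simp only [hsdef]
      rw [Finset.sum_range_succ]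
      rfl
    have hsmono : Monotone s := by
      apply monotone_nat_of_le_succ
      intro nn
      rw [hsq nn]
      linarith [hterm_nn nn q]
    have hsbdd : BddAbove (Set.range s) := by
      refine ⟨d q, ?_⟩
      rintro x ⟨nn, rfl⟩
      exact hpart nn q
    have hL := tendsto_atTop_ciSup hsmono hsbdd
    have hshift : Tendsto (fun nn => s (nn+1)) atTop (𝓝 (⨆ k, s k)) :=
      hL.comp (tendsto_add_atTop_nat 1)
    have hdiff : Tendsto (fun nn => s (nn+1) - s nn) atTop (𝓝 0) := by
      have := hshift.sub hL
      simpa using this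
    have heq : (fun nn => s (nn+1) - s nn) = fun nn => ((Bmat ^ nn) *ᵥ x0) q := by
      funext nn
      rw [hsq nn]
      ring
    rw [heq] at hdiff
    exact hdiff
  have hrowtend : ∀ q, Tendsto (fun k => ∑ r, (Bmat ^ k) q r) atTop (𝓝 0) := by
    intro q
    have h1 : ∀ k, ∑ r, (Bmat ^ k) q r = ε⁻¹ * (((Bmat ^ k) *ᵥ x0) q) := by
      intro k
      have h2 : ((Bmat ^ k) *ᵥ x0) q = ∑ r, (Bmat ^ k) q r * ε := rfl
      rw [h2, ← Finset.sum_mul]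
      field_simp
    have h3 := (htend0 q).const_mul ε⁻¹
    rw [mul_zero] at h3
    simpa only [← h1] using h3
  have hexist : ∃ k, ∀ q, ∑ r, (Bmat ^ (k+1)) q r < 1 := by
    have hev : ∀ᶠ k in atTop, ∀ q, ∑ r, (Bmat ^ k) q r < 1 := by
      rw [Filter.eventually_all]
      intro q
      exact (hrowtend q).eventually (eventually_lt_nhds one_pos)
    obtain ⟨k0, hk1, hk2⟩ := (hev.and (Filter.eventually_ge_atTop 1)).exists
    refine ⟨k0 - 1, ?_⟩
    have : k0 - 1 + 1 = k0 := by omega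
    rw [this]
    exact hk1
  obtain ⟨k, hk⟩ := hexist
  have hrad : specRad Bmat < ENNReal.ofReal 1 := specRad_lt_one Bmat hB0 k hk
  -- final assembly
  refine ⟨?_, 1, Bmat, hB0, ?_, ?_⟩
  · intro i j hij
    rw [Matrix.sub_apply, Matrix.one_apply_ne hij]
    have := hB0 i j
    linarith
  · rw [one_smul]
  · exact hrad
end

section
/- Suppose an m×m matrix X satisfies (i) 𝒢(X) ≥ 0, (ii) 0 ≤ X ≤ G, and (iii) I − Σ_{v=1}^{N} Σ_{j=0}^{v-1} (X^{v-1-j})ᵀ ⊗ (A_v X^{j}) is a nonsingular M-matrix, and let Y be an m×m matrix satisfying Σ_{v=1}^{N} Σ_{j=0}^{v-1} A_v X^{j} (Y − X) X^{v-1-j} − (Y − X) = −𝒢(X). Then 𝒢(Y) ≥ 0. -/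
open Matrix Finset Kronecker
open scoped ENNReal

section Aux

open Filter
open scoped Topology

lemma aux_specRad_clm_eq {n : Type*} [Fintype n] [DecidableEq n] (B : Matrix n n ℂ) :
    spectralRadius ℂ (toEuclideanCLM (𝕜 := ℂ) (n := n) B) = spectralRadius ℂ B := by
  unfold spectralRadius
  rw [AlgEquiv.spectrum_eq (toEuclideanCLM (𝕜 := ℂ) (n := n))]

lemma aux_pow_decay {n : Type*} [Fintype n] [DecidableEq n] (B : Matrix n n ℝ)
    {s : ℝ} (hs0 : 0 < s)
    (hs : spectralRadius ℂ (B.map (algebraMap ℝ ℂ)) < ENNReal.ofReal s) :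
    Tendsto (fun k : ℕ => s⁻¹ ^ k *
      ‖toEuclideanCLM (𝕜 := ℂ) (B.map (algebraMap ℝ ℂ)) ^ k‖) atTop (𝓝 0) := by
  set a := toEuclideanCLM (𝕜 := ℂ) (B.map (algebraMap ℝ ℂ)) with ha
  have hρ : spectralRadius ℂ a < ENNReal.ofReal s := by rw [ha, aux_specRad_clm_eq]; exact hs
  obtain ⟨c, hc1, hc2⟩ := exists_between hρ
  have hct : c ≠ ⊤ := (hc2.trans_le le_top).ne
  set r : ℝ := c.toReal with hrdef
  have hr0 : 0 ≤ r := ENNReal.toReal_nonneg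
  have hrs : r < s := by
    have := (ENNReal.toReal_lt_toReal hct ENNReal.ofReal_ne_top).mpr hc2
    rwa [ENNReal.toReal_ofReal hs0.le] at this
  have T := spectrum.pow_nnnorm_pow_one_div_tendsto_nhds_spectralRadius a
  have hev : ∀ᶠ k : ℕ in atTop, (‖a ^ k‖₊ : ℝ≥0∞) ^ (1 / (k : ℝ)) < c :=
    T.eventually_lt_const hc1
  have hev2 : ∀ᶠ k : ℕ in atTop, ‖a ^ k‖ ≤ r ^ k := by
    filter_upwards [hev, eventually_ge_atTop 1] with k hk hk1
    have hk0 : (k : ℝ) ≠ 0 := Nat.cast_ne_zero.mpr (by omega)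
    have h2 := ENNReal.rpow_lt_rpow hk (by positivity : (0:ℝ) < (k:ℝ))
    rw [← ENNReal.rpow_mul, one_div, inv_mul_cancel₀ hk0, ENNReal.rpow_one] at h2
    have h3 : ((‖a ^ k‖₊ : ℝ≥0∞)).toReal ≤ (c ^ (k : ℝ)).toReal :=
      ENNReal.toReal_le_toReal ENNReal.coe_ne_top
        (ENNReal.rpow_ne_top_of_nonneg (by positivity) hct) |>.mpr h2.le
    rw [ENNReal.coe_toReal, coe_nnnorm] at h3
    rw [← ENNReal.toReal_rpow] at h3
    rwa [Real.rpow_natCast] at h3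
  have hg : Tendsto (fun k : ℕ => (r / s) ^ k) atTop (𝓝 0) := by
    apply tendsto_pow_atTop_nhds_zero_of_lt_one (by positivity)
    rw [div_lt_one hs0]; exact hrs
  apply squeeze_zero' ?_ ?_ hg
  · filter_upwards with k; positivity
  · filter_upwards [hev2] with k hk
    rw [div_pow, div_eq_mul_inv, ← inv_pow, mul_comm]
    exact mul_le_mul_of_nonneg_right hk (by positivity)

lemma aux_entry_le_clm_norm {n : Type*} [Fintype n] [DecidableEq n] (M : Matrix n n ℂ)
    (i j : n) : ‖M i j‖ ≤ ‖toEuclideanCLM (𝕜 := ℂ) (n := n) M‖ := by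
  have h1 : M i j = inner ℂ (EuclideanSpace.single i (1:ℂ))
      (toEuclideanCLM (𝕜 := ℂ) (n := n) M (EuclideanSpace.single j 1)) := by
    have : (EuclideanSpace.single j (1:ℂ)) = WithLp.toLp 2 (Pi.single j 1) := by rw [PiLp.toLp_single]
    rw [this, toEuclideanCLM_toLp, EuclideanSpace.inner_single_left]
    simp [toLin'_apply]
  have h2 := norm_inner_le_norm (𝕜 := ℂ) (EuclideanSpace.single i (1:ℂ))
      (toEuclideanCLM (𝕜 := ℂ) (n := n) M (EuclideanSpace.single j 1))
  have h3 := (toEuclideanCLM (𝕜 := ℂ) (n := n) M).le_opNorm (EuclideanSpace.single j (1:ℂ))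
  rw [EuclideanSpace.norm_single, norm_one, one_mul] at h2
  rw [EuclideanSpace.norm_single, norm_one, mul_one] at h3
  rw [h1]; exact h2.trans h3

lemma aux_entry_mulVec_nonneg {n : Type*} [Fintype n] {A : Matrix n n ℝ}
    (hA : ∀ i j, 0 ≤ A i j) {x : n → ℝ} (hx : ∀ i, 0 ≤ x i) : ∀ i, 0 ≤ (A *ᵥ x) i := fun i =>
  Finset.sum_nonneg fun k _ => mul_nonneg (hA i k) (hx k)

lemma aux_entry_mul_nonneg {n : Type*} [Fintype n] {A B : Matrix n n ℝ} (hA : ∀ i j, 0 ≤ A i j)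
    (hB : ∀ i j, 0 ≤ B i j) : ∀ i j, 0 ≤ (A * B) i j := fun i j =>
  Finset.sum_nonneg fun k _ => mul_nonneg (hA i k) (hB k j)

lemma aux_entry_pow_nonneg {n : Type*} [Fintype n] [DecidableEq n] {A : Matrix n n ℝ}
    (hA : ∀ i j, 0 ≤ A i j) : ∀ k, ∀ i j, 0 ≤ (A ^ k) i j := by
  intro k
  induction k with
  | zero => intro i j; rw [pow_zero]; by_cases h : i = j <;> simp [one_apply, h]
  | succ k ih => rw [pow_succ]; exact aux_entry_mul_nonneg ih hA

lemma aux_entry_abs_le {n : Type*} [Fintype n] [DecidableEq n] (B : Matrix n n ℝ) (k : ℕ)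
    (i j : n) :
    |(B ^ k) i j| ≤ ‖toEuclideanCLM (𝕜 := ℂ) (B.map (algebraMap ℝ ℂ)) ^ k‖ := by
  have hmap : (B.map (algebraMap ℝ ℂ)) ^ k = (B ^ k).map (algebraMap ℝ ℂ) := by
    have := map_pow ((algebraMap ℝ ℂ).mapMatrix) B k
    simpa [RingHom.mapMatrix_apply] using this.symm
  have h1 : toEuclideanCLM (𝕜 := ℂ) (B.map (algebraMap ℝ ℂ)) ^ k =
      toEuclideanCLM (𝕜 := ℂ) ((B ^ k).map (algebraMap ℝ ℂ)) := by
    rw [← map_pow, hmap]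
  rw [h1]
  have h2 := aux_entry_le_clm_norm ((B ^ k).map (algebraMap ℝ ℂ)) i j
  have h3 : ((B ^ k).map (algebraMap ℝ ℂ)) i j = (((B ^ k) i j : ℝ) : ℂ) := rfl
  rwa [h3, Complex.norm_real, Real.norm_eq_abs] at h2

lemma aux_mmatrix_solve_nonneg {n : Type*} [Fintype n] [DecidableEq n]
    {s : ℝ} {B : Matrix n n ℝ} (hB : ∀ i j, 0 ≤ B i j)
    (hs : spectralRadius ℂ (B.map (algebraMap ℝ ℂ)) < ENNReal.ofReal s)
    {x z : n → ℝ} (hz : ∀ i, 0 ≤ z i)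
    (hxz : (s • (1 : Matrix n n ℝ) - B) *ᵥ x = z) : ∀ i, 0 ≤ x i := by
  have hs0 : 0 < s := ENNReal.ofReal_pos.mp (lt_of_le_of_lt zero_le hs)
  have hrec : x = s⁻¹ • (z + B *ᵥ x) := by
    rw [sub_mulVec, smul_mulVec, one_mulVec] at hxz
    rw [← hxz]
    ext i
    simp only [Pi.smul_apply, Pi.add_apply, Pi.sub_apply, smul_eq_mul]
    field_simp
    ring
  have hiter : ∀ k : ℕ, x = (∑ i ∈ Finset.range k, s⁻¹ ^ (i + 1) • ((B ^ i) *ᵥ z))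
      + s⁻¹ ^ k • ((B ^ k) *ᵥ x) := by
    intro k
    induction k with
    | zero => simp
    | succ k ih =>
        conv_lhs => rw [ih]
        rw [Finset.sum_range_succ]
        have h1 : (B ^ k) *ᵥ x = s⁻¹ • ((B ^ k) *ᵥ z) + s⁻¹ • ((B ^ (k+1)) *ᵥ x) := by
          conv_lhs => rw [hrec]
          rw [mulVec_smul, mulVec_add, pow_succ, ← mulVec_mulVec]
          module
        rw [h1]
        ext i
        simp only [Pi.add_apply, Pi.smul_apply, smul_eq_mul, pow_succ]
        ring
  intro i
  set a := toEuclideanCLM (𝕜 := ℂ) (B.map (algebraMap ℝ ℂ))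
  have hpd := aux_pow_decay B hs0 hs
  set C := ∑ j, |x j| with hC
  have htail : Tendsto (fun k : ℕ => s⁻¹ ^ k * ((B ^ k) *ᵥ x) i) atTop (𝓝 0) := by
    have hg' : Tendsto (fun k : ℕ => s⁻¹ ^ k * ‖a ^ k‖ * C) atTop (𝓝 0) := by
      have := hpd.mul_const C
      simpa only [zero_mul] using this
    apply squeeze_zero_norm' ?_ hg'
    filter_upwards with k
    have h1 : |((B ^ k) *ᵥ x) i| ≤ ‖a ^ k‖ * C := by
      rw [mulVec, dotProduct]
      calc |∑ j, (B ^ k) i j * x j| ≤ ∑ j, |(B ^ k) i j * x j| :=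
            Finset.abs_sum_le_sum_abs _ _
        _ ≤ ∑ j, ‖a ^ k‖ * |x j| := by
            apply Finset.sum_le_sum
            intro j _
            rw [abs_mul]
            exact mul_le_mul_of_nonneg_right (aux_entry_abs_le B k i j) (abs_nonneg _)
        _ = ‖a ^ k‖ * C := by rw [hC, Finset.mul_sum]
    rw [Real.norm_eq_abs, abs_mul, abs_pow, abs_inv, abs_of_pos hs0, mul_assoc]
    exact mul_le_mul_of_nonneg_left h1 (by positivity)
  have hp : ∀ k : ℕ, 0 ≤ (∑ i' ∈ Finset.range k, s⁻¹ ^ (i' + 1) • ((B ^ i') *ᵥ z)) i := by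
    intro k
    rw [Finset.sum_apply]
    apply Finset.sum_nonneg
    intro i' _
    rw [Pi.smul_apply, smul_eq_mul]
    exact mul_nonneg (by positivity) (aux_entry_mulVec_nonneg (aux_entry_pow_nonneg hB i') hz i)
  have hlim : Tendsto (fun k : ℕ => x i - s⁻¹ ^ k * ((B ^ k) *ᵥ x) i) atTop (𝓝 (x i)) := by
    have := (tendsto_const_nhds : Tendsto (fun _ : ℕ => x i) atTop (𝓝 (x i))).sub htail
    simpa using this
  refine ge_of_tendsto hlim ?_
  filter_upwards with k
  have := congrFun (hiter k) i
  rw [Pi.add_apply, Pi.smul_apply, smul_eq_mul] at this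
  have h2 : x i - s⁻¹ ^ k * ((B ^ k) *ᵥ x) i
      = (∑ i' ∈ Finset.range k, s⁻¹ ^ (i' + 1) • ((B ^ i') *ᵥ z)) i := by
    rw [this]; ring
  rw [h2]; exact hp k

lemma aux_sum_mulVec {n : Type*} [Fintype n] {ι : Type*} (s : Finset ι)
    (M : ι → Matrix n n ℝ) (x : n → ℝ) :
    (∑ i ∈ s, M i) *ᵥ x = ∑ i ∈ s, (M i) *ᵥ x := by
  ext p
  simp only [mulVec, dotProduct, Finset.sum_apply, Matrix.sum_apply, Finset.sum_mul]
  rw [Finset.sum_comm]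

lemma aux_kron_mulVec {n : Type*} [Fintype n] (P C E : Matrix n n ℝ) (a b : n) :
    ((Pᵀ ⊗ₖ C) *ᵥ fun p : n × n => E p.2 p.1) (a, b) = (C * E * P) b a := by
  simp only [mulVec, dotProduct, Fintype.sum_prod_type]
  rw [mul_apply]
  apply Finset.sum_congr rfl
  intro c _
  rw [mul_apply, Finset.sum_mul]
  apply Finset.sum_congr rfl
  intro d _
  simp only [kroneckerMap_apply, transpose_apply]
  ring

lemma aux_pow_add_ge {n : Type*} [Fintype n] [DecidableEq n] (X E : Matrix n n ℝ)
    (hX : ∀ i j, 0 ≤ X i j) (hE : ∀ i j, 0 ≤ E i j) (v : ℕ) :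
    ∀ i j, ((X ^ v) + ∑ t ∈ Finset.range v, X ^ t * E * X ^ (v - 1 - t)) i j
      ≤ ((X + E) ^ v) i j := by
  induction v with
  | zero => intro i j; simp
  | succ v ih =>
    have hXE : ∀ i j, 0 ≤ (X + E) i j := fun i j => add_nonneg (hX i j) (hE i j)
    have hTv : ∀ i j, 0 ≤ (∑ t ∈ Finset.range v, X ^ t * E * X ^ (v - 1 - t)) i j := by
      intro i j
      simp only [Matrix.sum_apply]
      exact Finset.sum_nonneg fun t _ => (aux_entry_mul_nonneg
        (aux_entry_mul_nonneg (aux_entry_pow_nonneg hX t) hE) (aux_entry_pow_nonneg hX _)) i j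
    intro i j
    set T : Matrix n n ℝ := ∑ t ∈ Finset.range v, X ^ t * E * X ^ (v - 1 - t) with hT
    have hT1 : (∑ t ∈ Finset.range (v+1), X ^ t * E * X ^ (v + 1 - 1 - t))
        = E * X ^ v + X * T := by
      rw [Finset.sum_range_succ']
      simp only [Nat.add_sub_cancel]
      rw [pow_zero, one_mul, Nat.sub_zero, Finset.mul_sum, add_comm]
      congr 1
      apply Finset.sum_congr rfl
      intro t ht
      have h2 : v - (t + 1) = v - 1 - t := by omega
      rw [pow_succ' X t, h2]
      simp only [mul_assoc]
    have hexp : (X + E) * (X ^ v + T) = X ^ (v+1) + (E * X ^ v + X * T) + E * T := by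
      rw [add_mul, mul_add, mul_add, ← pow_succ']
      abel
    have hstep : ((X + E) * (X ^ v + T)) i j ≤ ((X + E) ^ (v+1)) i j := by
      rw [pow_succ', mul_apply, mul_apply]
      apply Finset.sum_le_sum
      intro k _
      exact mul_le_mul_of_nonneg_left (ih k j) (hXE i k)
    have hET : 0 ≤ (E * T) i j := aux_entry_mul_nonneg hE hTv i j
    calc ((X ^ (v+1)) + ∑ t ∈ Finset.range (v+1), X ^ t * E * X ^ (v + 1 - 1 - t)) i j
        = (X ^ (v+1) + (E * X ^ v + X * T)) i j := by rw [hT1]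
      _ ≤ (X ^ (v+1) + (E * X ^ v + X * T) + E * T) i j := by
          simp only [Matrix.add_apply]; linarith
      _ = ((X + E) * (X ^ v + T)) i j := by rw [hexp]
      _ ≤ _ := hstep

end Aux

theorem stmt2 (m N : ℕ) (hm : 1 ≤ m) (hN : 1 ≤ N)
    (A : ℕ → Matrix (Fin m) (Fin m) ℝ)
    (hA : ∀ v, v ≤ N → ∀ i j, 0 ≤ A v i j)
    (G : Matrix (Fin m) (Fin m) ℝ)
    (hG0 : ∀ i j, 0 ≤ G i j)
    (hGsol : ∑ v ∈ Finset.range (N + 1), A v * G ^ v = G)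
    (hGmin : ∀ S : Matrix (Fin m) (Fin m) ℝ, (∀ i j, 0 ≤ S i j) →
      ∑ v ∈ Finset.range (N + 1), A v * S ^ v = S → ∀ i j, G i j ≤ S i j)
    (X : Matrix (Fin m) (Fin m) ℝ)
    (hGX : ∀ i j, 0 ≤ (∑ v ∈ Finset.range (N + 1), A v * X ^ v - X) i j)
    (hX0 : ∀ i j, 0 ≤ X i j) (hXG : ∀ i j, X i j ≤ G i j)
    (hMX : IsNonsingMMatrix
      ((1 : Matrix (Fin m × Fin m) (Fin m × Fin m) ℝ) -
      ∑ v ∈ Finset.Icc 1 N, ∑ j ∈ Finset.range v,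
        (X ^ (v - 1 - j))ᵀ ⊗ₖ (A v * X ^ j)))
    (Y : Matrix (Fin m) (Fin m) ℝ)
    (hY : ∑ v ∈ Finset.Icc 1 N, ∑ j ∈ Finset.range v,
        A v * X ^ j * (Y - X) * X ^ (v - 1 - j) - (Y - X) =
      -(∑ v ∈ Finset.range (N + 1), A v * X ^ v - X)) :
    ∀ i j, 0 ≤ (∑ v ∈ Finset.range (N + 1), A v * Y ^ v - Y) i j := by
  obtain ⟨_, s, B, hB0, hMeq, hsrad⟩ := hMX
  set S : Matrix (Fin m) (Fin m) ℝ := ∑ v ∈ Finset.range (N + 1), A v * X ^ v with hS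
  set L : Matrix (Fin m) (Fin m) ℝ := ∑ v ∈ Finset.Icc 1 N, ∑ j ∈ Finset.range v,
      A v * X ^ j * (Y - X) * X ^ (v - 1 - j) with hL
  -- the difference matrix and the "vectorized" versions
  have hEL : (Y - X) - L = S - X := by
    rw [← neg_sub L (Y - X), hY, neg_neg]
  -- vectorized equation
  set x : Fin m × Fin m → ℝ := fun p => (Y - X) p.2 p.1 with hx
  set z : Fin m × Fin m → ℝ := fun p => (S - X) p.2 p.1 with hz
  have hxz : (s • (1 : Matrix (Fin m × Fin m) (Fin m × Fin m) ℝ) - B) *ᵥ x = z := by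
    rw [← hMeq]
    ext p
    obtain ⟨a, b⟩ := p
    rw [sub_mulVec, one_mulVec, Pi.sub_apply]
    have hKv : (∑ v ∈ Finset.Icc 1 N, ∑ j ∈ Finset.range v,
        (X ^ (v - 1 - j))ᵀ ⊗ₖ (A v * X ^ j)) *ᵥ x = fun p : Fin m × Fin m => L p.2 p.1 := by
      rw [aux_sum_mulVec]
      ext q
      rw [Finset.sum_apply, hL, Matrix.sum_apply]
      apply Finset.sum_congr rfl
      intro v _
      rw [aux_sum_mulVec, Finset.sum_apply, Matrix.sum_apply]
      apply Finset.sum_congr rfl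
      intro t _
      obtain ⟨qa, qb⟩ := q
      exact aux_kron_mulVec (X ^ (v - 1 - t)) (A v * X ^ t) (Y - X) qa qb
    rw [hKv]
    have := congrFun (congrFun hEL b) a
    simp only [Matrix.sub_apply] at this
    simpa [hx, hz] using this
  have hznn : ∀ p : Fin m × Fin m, 0 ≤ z p := by
    intro p
    exact hGX p.2 p.1
  have hsrad' : spectralRadius ℂ (B.map (algebraMap ℝ ℂ)) < ENNReal.ofReal s := hsrad
  have hxnn := aux_mmatrix_solve_nonneg hB0 hsrad' hznn hxz
  have hE0 : ∀ i j, 0 ≤ (Y - X) i j := fun i j => hxnn (j, i)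
  -- rewrite L over a range
  have hL2 : L = ∑ w ∈ Finset.range N, ∑ t ∈ Finset.range (w+1),
      A (w+1) * X ^ t * (Y - X) * X ^ (w - t) := by
    rw [hL, ← Finset.Ico_add_one_right_eq_Icc, Finset.sum_Ico_eq_sum_range]
    apply Finset.sum_congr (by norm_num)
    intro w _
    have h1 : 1 + w = w + 1 := by omega
    rw [h1]
    apply Finset.sum_congr rfl
    intro t _
    congr 2
  have hLY : L = Y - S := by
    have h := hEL
    -- (Y - X) - L = S - X  ⇒  L = Y - S
    have : L = (Y - X) - (S - X) := by rw [← h]; abel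
    rw [this]; abel
  have e1 : (∑ v ∈ Finset.range (N + 1), A v * Y ^ v) - Y =
      ((∑ v ∈ Finset.range (N + 1), A v * Y ^ v) - S) - L := by
    rw [hLY]; abel
  have e2 : (∑ v ∈ Finset.range (N + 1), A v * Y ^ v) - S =
      ∑ w ∈ Finset.range N, (A (w+1) * Y ^ (w+1) - A (w+1) * X ^ (w+1)) := by
    rw [hS, Finset.sum_range_succ' (fun v => A v * Y ^ v) N,
      Finset.sum_range_succ' (fun v => A v * X ^ v) N, Finset.sum_sub_distrib]
    simp only [pow_zero, mul_one]
    abel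
  have e3 : (∑ v ∈ Finset.range (N + 1), A v * Y ^ v) - Y =
      ∑ w ∈ Finset.range N, (A (w+1) * Y ^ (w+1) - A (w+1) * X ^ (w+1) -
        ∑ t ∈ Finset.range (w+1), A (w+1) * X ^ t * (Y - X) * X ^ (w - t)) := by
    rw [e1, e2, hL2, ← Finset.sum_sub_distrib]
  intro i j
  have hgoal : (∑ v ∈ Finset.range (N + 1), A v * Y ^ v - Y) i j =
      ((∑ v ∈ Finset.range (N + 1), A v * Y ^ v) - Y) i j := rfl
  rw [hgoal, e3, Matrix.sum_apply]
  apply Finset.sum_nonneg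
  intro w hw
  have hwN : w + 1 ≤ N := by
    rw [Finset.mem_range] at hw; omega
  have hAw : ∀ i j, 0 ≤ A (w+1) i j := hA (w+1) hwN
  -- rewrite the term as A (w+1) * W
  have hterm : A (w+1) * Y ^ (w+1) - A (w+1) * X ^ (w+1) -
      ∑ t ∈ Finset.range (w+1), A (w+1) * X ^ t * (Y - X) * X ^ (w - t) =
      A (w+1) * (Y ^ (w+1) - (X ^ (w+1) +
        ∑ t ∈ Finset.range (w+1), X ^ t * (Y - X) * X ^ (w - t))) := by
    rw [mul_sub, mul_add, Finset.mul_sum]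
    simp only [mul_assoc]
    abel
  rw [hterm, mul_apply]
  apply Finset.sum_nonneg
  intro k _
  apply mul_nonneg (hAw i k)
  -- W k j ≥ 0
  have hXE : X + (Y - X) = Y := by abel
  have hpa := aux_pow_add_ge X (Y - X) hX0 hE0 (w+1) k j
  rw [hXE] at hpa
  simp only [Nat.add_sub_cancel] at hpa
  rw [Matrix.sub_apply]
  rw [Matrix.add_apply] at hpa
  have : ((X ^ (w+1)) + ∑ t ∈ Finset.range (w+1), X ^ t * (Y - X) * X ^ (w - t)) k j =
      (X ^ (w+1)) k j + (∑ t ∈ Finset.range (w+1), X ^ t * (Y - X) * X ^ (w - t)) k j :=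
    Matrix.add_apply _ _ _ _
  rw [this]
  linarith [hpa]
end

section
/- Suppose an m×m matrix X satisfies (i) 𝒢(X) ≥ 0, (ii) 0 ≤ X ≤ G, and (iii) I − Σ_{v=1}^{N} Σ_{j=0}^{v-1} (X^{v-1-j})ᵀ ⊗ (A_v X^{j}) is a nonsingular M-matrix, and let Y be an m×m matrix satisfying Σ_{v=1}^{N} Σ_{j=0}^{v-1} A_v X^{j} (Y − X) X^{v-1-j} − (Y − X) = −𝒢(X). Then 0 ≤ X ≤ Y ≤ G. -/
open Matrix Finset Kronecker
open scoped ENNReal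

open Filter Topology

section Analytic
variable {n : Type*} [Fintype n] [DecidableEq n]

attribute [local instance] Matrix.linftyOpNormedRing Matrix.linftyOpNormedAlgebra
  Matrix.linftyOpNormedSpace

lemma my_entry_nnnorm_le (A : Matrix n n ℂ) (i j : n) : ‖A i j‖₊ ≤ ‖A‖₊ := by
  rw [Matrix.linfty_opNNNorm_def]
  calc ‖A i j‖₊ ≤ ∑ j', ‖A i j'‖₊ :=
        Finset.single_le_sum (f := fun j => ‖A i j‖₊) (fun _ _ => zero_le) (Finset.mem_univ j)
    _ ≤ Finset.univ.sup fun i => ∑ j, ‖A i j‖₊ :=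
        Finset.le_sup (f := fun i => ∑ j, ‖A i j‖₊) (Finset.mem_univ i)

lemma my_pow_entry_tendsto_zero (B : Matrix n n ℝ) (s : ℝ)
    (hlt : specRad B < ENNReal.ofReal s) (i j : n) :
    Tendsto (fun k => (s⁻¹) ^ k * (B ^ k) i j) atTop (𝓝 0) := by
  have hs : 0 < s := by
    rcases le_or_gt s 0 with h | h
    · simp [ENNReal.ofReal_eq_zero.2 h] at hlt
    · exact h
  haveI : CompleteSpace (Matrix n n ℂ) := FiniteDimensional.complete ℂ _
  set Bc : Matrix n n ℂ := B.map (algebraMap ℝ ℂ) with hBc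
  obtain ⟨r, hr1, hr2⟩ := ENNReal.lt_iff_exists_nnreal_btwn.mp hlt
  have hrs : (r : ℝ) < s := by
    rw [← ENNReal.ofReal_coe_nnreal] at hr2
    exact (ENNReal.ofReal_lt_ofReal_iff hs).mp hr2
  have hgel := spectrum.pow_nnnorm_pow_one_div_tendsto_nhds_spectralRadius Bc
  have hev : ∀ᶠ k : ℕ in atTop, (‖Bc ^ k‖₊ : ℝ≥0∞) ^ (1 / (k:ℝ)) < r :=
    hgel.eventually_lt_const hr1
  have hev2 : ∀ᶠ k in atTop, ‖Bc ^ k‖ ≤ (r : ℝ) ^ k := by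
    filter_upwards [hev, eventually_ge_atTop 1] with k hk hk1
    have hk0 : (k : ℝ) ≠ 0 := by positivity
    have : ((‖Bc ^ k‖₊ : ℝ≥0∞) ^ (1 / (k:ℝ))) ^ (k : ℝ) ≤ (r : ℝ≥0∞) ^ (k:ℝ) :=
      ENNReal.rpow_le_rpow hk.le (by positivity)
    rw [← ENNReal.rpow_mul, one_div, inv_mul_cancel₀ hk0, ENNReal.rpow_one,
      ENNReal.rpow_natCast, ← ENNReal.coe_pow, ENNReal.coe_le_coe] at this
    have h3 : ‖Bc ^ k‖ = ((‖Bc ^ k‖₊ : ℝ)) := rfl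
    rw [h3]
    exact_mod_cast this
  have hbc : ∀ k, (Bc ^ k) i j = ((B ^ k) i j : ℂ) := by
    intro k
    have : Bc ^ k = (B ^ k).map (algebraMap ℝ ℂ) := by
      simp only [hBc, ← RingHom.mapMatrix_apply, ← map_pow]
    simp [this]
  have hbound : ∀ᶠ k in atTop, ‖(s⁻¹) ^ k * (B ^ k) i j‖ ≤ ((r:ℝ)/s) ^ k := by
    filter_upwards [hev2] with k hk
    have h1 : |(B ^ k) i j| ≤ (r:ℝ) ^ k := by
      have := my_entry_nnnorm_le (Bc ^ k) i j
      have h2 : ‖(Bc ^ k) i j‖ ≤ ‖Bc ^ k‖ := this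
      rw [hbc k, Complex.norm_real] at h2
      exact h2.trans hk
    rw [norm_mul, norm_pow, norm_inv, Real.norm_of_nonneg hs.le, Real.norm_eq_abs,
      div_eq_mul_inv, mul_pow, mul_comm ((r:ℝ)^k)]
    exact mul_le_mul_of_nonneg_left h1 (by positivity)
  have hgeo : Tendsto (fun k => ((r:ℝ)/s) ^ k) atTop (𝓝 0) := by
    apply tendsto_pow_atTop_nhds_zero_of_lt_one (by positivity)
    rw [div_lt_one hs]; exact hrs
  exact squeeze_zero_norm' hbound hgeo

end Analytic

section MM
variable {n : Type*} [Fintype n] [DecidableEq n]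

lemma my_pow_nonneg {B : Matrix n n ℝ} (hB : ∀ i j, 0 ≤ B i j) :
    ∀ (k : ℕ) i j, 0 ≤ (B ^ k) i j := by
  intro k
  induction k with
  | zero => intro i j; rw [pow_zero, Matrix.one_apply]; split_ifs <;> norm_num
  | succ k ih =>
    intro i j
    rw [pow_succ, Matrix.mul_apply]
    exact Finset.sum_nonneg fun l _ => mul_nonneg (ih i l) (hB l j)

lemma my_mmatrix_sol_nonneg (M : Matrix n n ℝ) (hM : IsNonsingMMatrix M)
    (u w : n → ℝ) (hw : ∀ i, 0 ≤ w i) (h : M *ᵥ u = w) : ∀ i, 0 ≤ u i := by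
  obtain ⟨-, s, B, hB, rfl, hlt⟩ := hM
  have hs : 0 < s := by
    rcases le_or_gt s 0 with h' | h'
    · simp [ENNReal.ofReal_eq_zero.2 h'] at hlt
    · exact h'
  have hrec : u = s⁻¹ • w + s⁻¹ • (B *ᵥ u) := by
    rw [Matrix.sub_mulVec, Matrix.smul_mulVec, Matrix.one_mulVec] at h
    have : s • u = w + B *ᵥ u := by
      rw [← h]; abel
    calc u = s⁻¹ • (s • u) := by rw [smul_smul, inv_mul_cancel₀ hs.ne', one_smul]
      _ = s⁻¹ • w + s⁻¹ • (B *ᵥ u) := by rw [this, smul_add]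
  have key : ∀ k : ℕ,
      u = (∑ t ∈ Finset.range k, (s⁻¹) ^ (t + 1) • (B ^ t *ᵥ w)) + (s⁻¹) ^ k • (B ^ k *ᵥ u) := by
    intro k
    induction k with
    | zero => simp
    | succ k ih =>
      have step : (s⁻¹) ^ k • (B ^ k *ᵥ u) =
          (s⁻¹) ^ (k + 1) • (B ^ k *ᵥ w) + (s⁻¹) ^ (k + 1) • (B ^ (k + 1) *ᵥ u) := by
        conv_lhs => rw [hrec]
        rw [Matrix.mulVec_add, Matrix.mulVec_smul, Matrix.mulVec_smul, Matrix.mulVec_mulVec,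
          ← pow_succ, smul_add, smul_smul, smul_smul, ← pow_succ]
      conv_lhs => rw [ih]
      rw [step, Finset.sum_range_succ]
      abel
  intro i
  have hle : ∀ k : ℕ, ((s⁻¹) ^ k • (B ^ k *ᵥ u)) i ≤ u i := by
    intro k
    conv_rhs => rw [key k]
    have h0 : 0 ≤ (∑ t ∈ Finset.range k, (s⁻¹) ^ (t + 1) • (B ^ t *ᵥ w)) i := by
      rw [Finset.sum_apply]
      refine Finset.sum_nonneg fun t _ => ?_
      have hterm : 0 ≤ (B ^ t *ᵥ w) i := by
        simp only [Matrix.mulVec, dotProduct]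
        exact Finset.sum_nonneg fun l _ => mul_nonneg (my_pow_nonneg hB t i l) (hw l)
      simp only [Pi.smul_apply, smul_eq_mul]
      exact mul_nonneg (by positivity) hterm
    simp only [Pi.add_apply]
    linarith
  have heq : ∀ k : ℕ, ((s⁻¹) ^ k • (B ^ k *ᵥ u)) i =
      ∑ l, ((s⁻¹) ^ k * (B ^ k) i l) * u l := by
    intro k
    simp [Matrix.mulVec, dotProduct, Finset.mul_sum, mul_assoc]
  have htend : Tendsto (fun k : ℕ => ((s⁻¹) ^ k • (B ^ k *ᵥ u)) i) atTop (𝓝 0) := by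
    simp only [heq]
    have := tendsto_finset_sum (Finset.univ : Finset n)
      (fun l _ => (my_pow_entry_tendsto_zero B s hlt i l).mul_const (u l))
    simpa using this
  exact le_of_tendsto htend (Eventually.of_forall hle)

end MM

section MainAux
variable {m : ℕ}

lemma my_sum_mulVec {n : Type*} [Fintype n] {ι : Type*} (s : Finset ι)
    (F : ι → Matrix n n ℝ) (x : n → ℝ) :
    (∑ v ∈ s, F v) *ᵥ x = ∑ v ∈ s, F v *ᵥ x := by
  classical
  induction s using Finset.induction with
  | empty => simp
  | insert _ _ h ih => rw [Finset.sum_insert h, Finset.sum_insert h, Matrix.add_mulVec, ih]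

def vecM (Z : Matrix (Fin m) (Fin m) ℝ) : Fin m × Fin m → ℝ := fun p => Z p.2 p.1

lemma vecM_sub (Z W : Matrix (Fin m) (Fin m) ℝ) : vecM (Z - W) = vecM Z - vecM W := rfl

lemma vecM_sum {ι : Type*} (s : Finset ι) (F : ι → Matrix (Fin m) (Fin m) ℝ) :
    vecM (∑ v ∈ s, F v) = ∑ v ∈ s, vecM (F v) := by
  funext p
  simp [vecM, Matrix.sum_apply, Finset.sum_apply]

lemma vec_kron (P Q Z : Matrix (Fin m) (Fin m) ℝ) :
    (Qᵀ ⊗ₖ P) *ᵥ vecM Z = vecM (P * Z * Q) := by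
  funext p
  obtain ⟨a, b⟩ := p
  simp only [vecM, Matrix.mulVec, dotProduct, Matrix.kroneckerMap_apply, Matrix.transpose_apply,
    Matrix.mul_apply, Fintype.sum_prod_type, Finset.sum_mul]
  exact Finset.sum_congr rfl fun c _ => Finset.sum_congr rfl fun d _ => by ring

lemma my_mul_entry_nonneg {P Q : Matrix (Fin m) (Fin m) ℝ}
    (hP : ∀ i j, 0 ≤ P i j) (hQ : ∀ i j, 0 ≤ Q i j) : ∀ i j, 0 ≤ (P * Q) i j := by
  intro i j
  rw [Matrix.mul_apply]
  exact Finset.sum_nonneg fun l _ => mul_nonneg (hP i l) (hQ l j)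

lemma my_pow_le {X G : Matrix (Fin m) (Fin m) ℝ} (hX0 : ∀ i j, 0 ≤ X i j)
    (hXG : ∀ i j, X i j ≤ G i j) : ∀ (k : ℕ) i j, (X ^ k) i j ≤ (G ^ k) i j := by
  intro k
  induction k with
  | zero => intro i j; simp only [pow_zero]; exact le_rfl
  | succ k ih =>
    intro i j
    rw [pow_succ, pow_succ, Matrix.mul_apply, Matrix.mul_apply]
    refine Finset.sum_le_sum fun l _ => ?_
    exact mul_le_mul (ih i l) (hXG l j) (hX0 l j)
      (le_trans (my_pow_nonneg hX0 k i l) (ih i l))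

lemma my_telescope (X G : Matrix (Fin m) (Fin m) ℝ) :
    ∀ v : ℕ, G ^ v - X ^ v = ∑ j ∈ Finset.range v, G ^ j * (G - X) * X ^ (v - 1 - j) := by
  intro v
  induction v with
  | zero => simp
  | succ v ih =>
    simp only [Nat.add_sub_cancel]
    rw [Finset.sum_range_succ]
    have hcong : ∀ j ∈ Finset.range v,
        G ^ j * (G - X) * X ^ (v - j) = G ^ j * (G - X) * X ^ (v - 1 - j) * X := by
      intro j hj
      have hj' : j < v := Finset.mem_range.mp hj
      have : v - j = (v - 1 - j) + 1 := by omega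
      rw [this, pow_succ, ← mul_assoc]
    rw [Finset.sum_congr rfl hcong, ← Finset.sum_mul, ← ih, Nat.sub_self, pow_zero, mul_one]
    rw [pow_succ, pow_succ]
    noncomm_ring

end MainAux


theorem stmt3 (m N : ℕ) (hm : 1 ≤ m) (hN : 1 ≤ N)
    (A : ℕ → Matrix (Fin m) (Fin m) ℝ)
    (hA : ∀ v, v ≤ N → ∀ i j, 0 ≤ A v i j)
    (G : Matrix (Fin m) (Fin m) ℝ)
    (hG0 : ∀ i j, 0 ≤ G i j)
    (hGsol : ∑ v ∈ Finset.range (N + 1), A v * G ^ v = G)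
    (hGmin : ∀ S : Matrix (Fin m) (Fin m) ℝ, (∀ i j, 0 ≤ S i j) →
      ∑ v ∈ Finset.range (N + 1), A v * S ^ v = S → ∀ i j, G i j ≤ S i j)
    (X : Matrix (Fin m) (Fin m) ℝ)
    (hGX : ∀ i j, 0 ≤ (∑ v ∈ Finset.range (N + 1), A v * X ^ v - X) i j)
    (hX0 : ∀ i j, 0 ≤ X i j) (hXG : ∀ i j, X i j ≤ G i j)
    (hMX : IsNonsingMMatrix
      ((1 : Matrix (Fin m × Fin m) (Fin m × Fin m) ℝ) -
      ∑ v ∈ Finset.Icc 1 N, ∑ j ∈ Finset.range v,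
        (X ^ (v - 1 - j))ᵀ ⊗ₖ (A v * X ^ j)))
    (Y : Matrix (Fin m) (Fin m) ℝ)
    (hY : ∑ v ∈ Finset.Icc 1 N, ∑ j ∈ Finset.range v,
        A v * X ^ j * (Y - X) * X ^ (v - 1 - j) - (Y - X) =
      -(∑ v ∈ Finset.range (N + 1), A v * X ^ v - X)) :
    (∀ i j, 0 ≤ X i j) ∧ (∀ i j, X i j ≤ Y i j) ∧ (∀ i j, Y i j ≤ G i j) := by
  set E : Matrix (Fin m) (Fin m) ℝ := ∑ v ∈ Finset.range (N + 1), A v * X ^ v - X with hE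
  set M : Matrix (Fin m × Fin m) (Fin m × Fin m) ℝ :=
    (1 : Matrix (Fin m × Fin m) (Fin m × Fin m) ℝ) -
      ∑ v ∈ Finset.Icc 1 N, ∑ j ∈ Finset.range v,
        (X ^ (v - 1 - j))ᵀ ⊗ₖ (A v * X ^ j) with hM
  -- the linear operator L applied to Z
  set L : Matrix (Fin m) (Fin m) ℝ → Matrix (Fin m) (Fin m) ℝ :=
    fun Z => ∑ v ∈ Finset.Icc 1 N, ∑ j ∈ Finset.range v,
      A v * X ^ j * Z * X ^ (v - 1 - j) with hL
  have hK : ∀ Z : Matrix (Fin m) (Fin m) ℝ, M *ᵥ vecM Z = vecM (Z - L Z) := by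
    intro Z
    rw [hM, Matrix.sub_mulVec, Matrix.one_mulVec, my_sum_mulVec, vecM_sub]
    congr 1
    rw [hL]
    have : ∀ v ∈ Finset.Icc 1 N,
        (∑ j ∈ Finset.range v, (X ^ (v - 1 - j))ᵀ ⊗ₖ (A v * X ^ j)) *ᵥ vecM Z
          = ∑ j ∈ Finset.range v, vecM (A v * X ^ j * Z * X ^ (v - 1 - j)) := by
      intro v _
      rw [my_sum_mulVec]
      exact Finset.sum_congr rfl fun j _ => vec_kron (A v * X ^ j) (X ^ (v - 1 - j)) Z
    rw [Finset.sum_congr rfl this, vecM_sum]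
    exact Finset.sum_congr rfl fun v _ => (vecM_sum _ _).symm
  -- X ≤ Y
  have hYX : (Y - X) - L (Y - X) = E := by
    rw [← neg_sub (L (Y - X)) (Y - X), hL, hY, neg_neg]
  have hXY : ∀ i j, 0 ≤ (Y - X) i j := by
    have hsol : M *ᵥ vecM (Y - X) = vecM E := by rw [hK, hYX]
    have := my_mmatrix_sol_nonneg M hMX (vecM (Y - X)) (vecM E)
      (fun p => hGX p.2 p.1) hsol
    intro i j
    exact this (j, i)
  -- algebra for G - Y
  have h0notin : (0 : ℕ) ∉ Finset.Icc 1 N := by simp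
  have hrange : Finset.range (N + 1) = insert 0 (Finset.Icc 1 N) := by
    ext x; simp; omega
  have hGmX : G - X - E = ∑ v ∈ Finset.Icc 1 N, (A v * G ^ v - A v * X ^ v) := by
    rw [Finset.sum_sub_distrib]
    conv_lhs => rw [← hGsol]
    rw [hE, hrange, Finset.sum_insert h0notin, Finset.sum_insert h0notin]
    simp only [pow_zero, mul_one]
    abel
  have h1 : G - X - E = ∑ v ∈ Finset.Icc 1 N, ∑ j ∈ Finset.range v,
      A v * (G ^ j * (G - X) * X ^ (v - 1 - j)) := by
    rw [hGmX]
    refine Finset.sum_congr rfl fun v _ => ?_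
    rw [← mul_sub, my_telescope X G v, Finset.mul_sum]
  have hGY : G - Y = (G - X) - (Y - X) := by abel
  have hLsub : L (G - Y) = L (G - X) - L (Y - X) := by
    rw [hL, hGY]
    simp only [mul_sub, sub_mul]
    rw [← Finset.sum_sub_distrib]
    refine Finset.sum_congr rfl fun v _ => ?_
    rw [← Finset.sum_sub_distrib]
  have hident : (G - Y) - L (G - Y) = ∑ v ∈ Finset.Icc 1 N, ∑ j ∈ Finset.range v,
      A v * ((G ^ j - X ^ j) * ((G - X) * X ^ (v - 1 - j))) := by
    rw [hLsub, hGY]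
    have hre : (G - X) - (Y - X) - (L (G - X) - L (Y - X))
        = (G - X - E) - L (G - X) - ((Y - X) - L (Y - X)) + E := by abel
    rw [hre, hYX, h1, hL]
    rw [← Finset.sum_sub_distrib]
    have hcong : ∀ v ∈ Finset.Icc 1 N,
        (∑ j ∈ Finset.range v, A v * (G ^ j * (G - X) * X ^ (v - 1 - j)))
          - ∑ j ∈ Finset.range v, A v * X ^ j * (G - X) * X ^ (v - 1 - j)
        = ∑ j ∈ Finset.range v,
            A v * ((G ^ j - X ^ j) * ((G - X) * X ^ (v - 1 - j))) := by
      intro v _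
      rw [← Finset.sum_sub_distrib]
      refine Finset.sum_congr rfl fun j _ => by noncomm_ring
    rw [Finset.sum_congr rfl hcong]
    abel
  have hRHS : ∀ i j, 0 ≤ (∑ v ∈ Finset.Icc 1 N, ∑ j ∈ Finset.range v,
      A v * ((G ^ j - X ^ j) * ((G - X) * X ^ (v - 1 - j)))) i j := by
    intro i j
    rw [Matrix.sum_apply]
    refine Finset.sum_nonneg fun v hv => ?_
    rw [Matrix.sum_apply]
    refine Finset.sum_nonneg fun t _ => ?_
    have hvN : v ≤ N := (Finset.mem_Icc.mp hv).2
    refine my_mul_entry_nonneg (hA v hvN) (my_mul_entry_nonneg ?_ (my_mul_entry_nonneg ?_ ?_)) i j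
    · intro a b
      have := my_pow_le hX0 hXG t a b
      simp only [Matrix.sub_apply]
      linarith
    · intro a b
      simp only [Matrix.sub_apply]
      have := hXG a b; linarith
    · exact my_pow_nonneg hX0 _
  have hYG : ∀ i j, 0 ≤ (G - Y) i j := by
    have hsol : M *ᵥ vecM (G - Y) = vecM (∑ v ∈ Finset.Icc 1 N, ∑ j ∈ Finset.range v,
        A v * ((G ^ j - X ^ j) * ((G - X) * X ^ (v - 1 - j)))) := by
      rw [hK, hident]
    have := my_mmatrix_sol_nonneg M hMX _ _ (fun p => hRHS p.2 p.1) hsol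
    intro i j
    exact this (j, i)
  refine ⟨hX0, fun i j => ?_, fun i j => ?_⟩
  · have := hXY i j; simp only [Matrix.sub_apply] at this; linarith
  · have := hYG i j; simp only [Matrix.sub_apply] at this; linarith
end

section
/- Suppose I − Σ_{v=1}^{N} Σ_{j=0}^{v-1} (G^{v-1-j})ᵀ ⊗ (A_v G^{j}) is a nonsingular M-matrix. Then for every m×m matrix Y with 0 ≤ Y ≤ G, the matrix I − Σ_{v=1}^{N} Σ_{j=0}^{v-1} (Y^{v-1-j})ᵀ ⊗ (A_v Y^{j}) is a nonsingular M-matrix. -/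
open Matrix Finset Kronecker
open scoped ENNReal

section aux
attribute [local instance] Matrix.linftyOpNormedRing Matrix.linftyOpNormedAlgebra

variable {n : Type*} [Fintype n] [DecidableEq n]

lemma pow_entry_nonneg {B : Matrix n n ℝ} (hB : ∀ i j, 0 ≤ B i j) (k : ℕ) :
    ∀ i j, 0 ≤ (B ^ k) i j := by
  induction k with
  | zero => intro i j; rw [pow_zero]; by_cases h : i = j <;> simp [Matrix.one_apply, h]
  | succ k ih =>
      intro i j
      rw [pow_succ, Matrix.mul_apply]
      exact Finset.sum_nonneg fun l _ => mul_nonneg (ih i l) (hB l j)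

lemma mul_entry_mono {P P' Q Q' : Matrix n n ℝ}
    (hP0 : ∀ i j, 0 ≤ P i j) (hP : ∀ i j, P i j ≤ P' i j)
    (hQ0 : ∀ i j, 0 ≤ Q i j) (hQ : ∀ i j, Q i j ≤ Q' i j) :
    ∀ i j, (P * Q) i j ≤ (P' * Q') i j := by
  intro i j
  rw [Matrix.mul_apply, Matrix.mul_apply]
  refine Finset.sum_le_sum fun l _ => ?_
  exact mul_le_mul (hP i l) (hQ l j) (hQ0 l j) ((hP0 i l).trans (hP i l))

lemma pow_entry_mono {B C : Matrix n n ℝ} (hB : ∀ i j, 0 ≤ B i j)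
    (hBC : ∀ i j, B i j ≤ C i j) (k : ℕ) : ∀ i j, (B ^ k) i j ≤ (C ^ k) i j := by
  induction k with
  | zero => intro i j; simp
  | succ k ih =>
      have := mul_entry_mono (pow_entry_nonneg hB k) ih hB hBC
      intro i j
      rw [pow_succ, pow_succ]
      exact this i j

lemma specRad_mono {B C : Matrix n n ℝ} (hB : ∀ i j, 0 ≤ B i j)
    (hBC : ∀ i j, B i j ≤ C i j) : specRad B ≤ specRad C := by
  have h1 := spectrum.pow_nnnorm_pow_one_div_tendsto_nhds_spectralRadius
    (B.map (algebraMap ℝ ℂ))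
  have h2 := spectrum.pow_nnnorm_pow_one_div_tendsto_nhds_spectralRadius
    (C.map (algebraMap ℝ ℂ))
  refine le_of_tendsto_of_tendsto' h1 h2 fun k => ?_
  have hmapB : (B.map (algebraMap ℝ ℂ)) ^ k = (B ^ k).map (algebraMap ℝ ℂ) := by
    simpa [RingHom.mapMatrix_apply] using
      (map_pow (RingHom.mapMatrix (algebraMap ℝ ℂ)) B k).symm
  have hmapC : (C.map (algebraMap ℝ ℂ)) ^ k = (C ^ k).map (algebraMap ℝ ℂ) := by
    simpa [RingHom.mapMatrix_apply] using
      (map_pow (RingHom.mapMatrix (algebraMap ℝ ℂ)) C k).symm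
  have hnn : ‖(B.map (algebraMap ℝ ℂ)) ^ k‖₊ ≤ ‖(C.map (algebraMap ℝ ℂ)) ^ k‖₊ := by
    rw [hmapB, hmapC, Matrix.linfty_opNNNorm_def, Matrix.linfty_opNNNorm_def]
    refine Finset.sup_mono_fun fun i _ => Finset.sum_le_sum fun j _ => ?_
    simp only [Matrix.map_apply, Complex.coe_algebraMap, Complex.nnnorm_real]
    rw [← NNReal.coe_le_coe, coe_nnnorm, coe_nnnorm, Real.norm_eq_abs, Real.norm_eq_abs,
      abs_of_nonneg (pow_entry_nonneg hB k i j),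
      abs_of_nonneg (le_trans (pow_entry_nonneg hB k i j) (pow_entry_mono hB hBC k i j))]
    exact pow_entry_mono hB hBC k i j
  exact ENNReal.rpow_le_rpow (by exact_mod_cast hnn) (by positivity)

end aux

lemma specRad_add_smul_one_le {n : Type*} [Fintype n] [DecidableEq n]
    (B : Matrix n n ℝ) (t : ℝ) (ht : 0 ≤ t) :
    specRad (B + t • 1) ≤ specRad B + ENNReal.ofReal t := by
  have hmap : (B + t • (1 : Matrix n n ℝ)).map (algebraMap ℝ ℂ)
      = algebraMap ℂ (Matrix n n ℂ) (t : ℂ) + B.map (algebraMap ℝ ℂ) := by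
    ext i j
    by_cases h : i = j <;>
      simp [Matrix.map_apply, Matrix.one_apply, Matrix.algebraMap_matrix_apply, h, add_comm]
  unfold specRad
  rw [hmap, spectralRadius]
  refine iSup₂_le fun k hk => ?_
  rw [← spectrum.singleton_add_eq, Set.singleton_add] at hk
  obtain ⟨μ, hμ, rfl⟩ := hk
  calc (‖(t : ℂ) + μ‖₊ : ℝ≥0∞) ≤ (‖(t : ℂ)‖₊ : ℝ≥0∞) + (‖μ‖₊ : ℝ≥0∞) := by
        rw [← ENNReal.coe_add]
        exact ENNReal.coe_le_coe.mpr (nnnorm_add_le _ _)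
    _ ≤ spectralRadius ℂ (B.map (algebraMap ℝ ℂ)) + ENNReal.ofReal t := by
        rw [add_comm]
        refine add_le_add (le_iSup₂ (f := fun k _ => (‖k‖₊ : ℝ≥0∞)) μ hμ) ?_
        have h : ‖(t : ℂ)‖₊ = t.toNNReal := by
          ext
          simp only [coe_nnnorm, Complex.norm_real, Real.norm_eq_abs,
            Real.coe_toNNReal t ht]
          exact abs_of_nonneg ht
        rw [h, ENNReal.ofReal]

theorem stmt4 (m N : ℕ) (hm : 1 ≤ m) (hN : 1 ≤ N)
    (A : ℕ → Matrix (Fin m) (Fin m) ℝ)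
    (hA : ∀ v, v ≤ N → ∀ i j, 0 ≤ A v i j)
    (G : Matrix (Fin m) (Fin m) ℝ)
    (hG0 : ∀ i j, 0 ≤ G i j)
    (hGsol : ∑ v ∈ Finset.range (N + 1), A v * G ^ v = G)
    (hGmin : ∀ S : Matrix (Fin m) (Fin m) ℝ, (∀ i j, 0 ≤ S i j) →
      ∑ v ∈ Finset.range (N + 1), A v * S ^ v = S → ∀ i j, G i j ≤ S i j)
    (hMG : IsNonsingMMatrix
      ((1 : Matrix (Fin m × Fin m) (Fin m × Fin m) ℝ) -
      ∑ v ∈ Finset.Icc 1 N, ∑ j ∈ Finset.range v,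
        (G ^ (v - 1 - j))ᵀ ⊗ₖ (A v * G ^ j))) :
    ∀ Y : Matrix (Fin m) (Fin m) ℝ, (∀ i j, 0 ≤ Y i j) → (∀ i j, Y i j ≤ G i j) →
      IsNonsingMMatrix
        ((1 : Matrix (Fin m × Fin m) (Fin m × Fin m) ℝ) -
      ∑ v ∈ Finset.Icc 1 N, ∑ j ∈ Finset.range v,
        (Y ^ (v - 1 - j))ᵀ ⊗ₖ (A v * Y ^ j)) := by
  intro Y hY0 hYG
  obtain ⟨hZ, s, B, hB0, hEq, hρ⟩ := hMG
  set RG := ∑ v ∈ Finset.Icc 1 N, ∑ j ∈ Finset.range v,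
      (G ^ (v - 1 - j))ᵀ ⊗ₖ (A v * G ^ j) with hRGdef
  set RY := ∑ v ∈ Finset.Icc 1 N, ∑ j ∈ Finset.range v,
      (Y ^ (v - 1 - j))ᵀ ⊗ₖ (A v * Y ^ j) with hRYdef
  -- entrywise nonnegativity and monotonicity of RY, RG
  have hterm0 : ∀ v ∈ Finset.Icc 1 N, ∀ j ∈ Finset.range v, ∀ p q,
      0 ≤ ((Y ^ (v - 1 - j))ᵀ ⊗ₖ (A v * Y ^ j)) p q := by
    rintro v hv j _ ⟨p1, p2⟩ ⟨q1, q2⟩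
    rw [Matrix.kroneckerMap_apply, Matrix.transpose_apply]
    refine mul_nonneg (pow_entry_nonneg hY0 _ _ _) ?_
    rw [Matrix.mul_apply]
    exact Finset.sum_nonneg fun l _ => mul_nonneg
      (hA v (Finset.mem_Icc.mp hv).2 _ _) (pow_entry_nonneg hY0 _ _ _)
  have htermle : ∀ v ∈ Finset.Icc 1 N, ∀ j ∈ Finset.range v, ∀ p q,
      ((Y ^ (v - 1 - j))ᵀ ⊗ₖ (A v * Y ^ j)) p q
        ≤ ((G ^ (v - 1 - j))ᵀ ⊗ₖ (A v * G ^ j)) p q := by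
    rintro v hv j _ ⟨p1, p2⟩ ⟨q1, q2⟩
    rw [Matrix.kroneckerMap_apply, Matrix.kroneckerMap_apply,
      Matrix.transpose_apply, Matrix.transpose_apply]
    have hAv := hA v (Finset.mem_Icc.mp hv).2
    have h2 : (A v * Y ^ j) p2 q2 ≤ (A v * G ^ j) p2 q2 :=
      mul_entry_mono hAv (fun i j => le_refl _) (pow_entry_nonneg hY0 j)
        (pow_entry_mono hY0 hYG j) p2 q2
    have h20 : 0 ≤ (A v * Y ^ j) p2 q2 := by
      rw [Matrix.mul_apply]
      exact Finset.sum_nonneg fun l _ => mul_nonneg (hAv _ _) (pow_entry_nonneg hY0 _ _ _)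
    exact mul_le_mul (pow_entry_mono hY0 hYG _ q1 p1) h2 h20
      (pow_entry_nonneg hG0 _ _ _)
  have hRY0 : ∀ p q, 0 ≤ RY p q := by
    intro p q
    rw [hRYdef]
    simp only [Matrix.sum_apply]
    exact Finset.sum_nonneg fun v hv => Finset.sum_nonneg fun j hj => hterm0 v hv j hj p q
  have hRle : ∀ p q, RY p q ≤ RG p q := by
    intro p q
    rw [hRYdef, hRGdef]
    simp only [Matrix.sum_apply]
    exact Finset.sum_le_sum fun v hv => Finset.sum_le_sum fun j hj => htermle v hv j hj p q
  -- positivity of s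
  have hs0 : 0 < s := ENNReal.ofReal_pos.mp ((zero_le).trans_lt hρ)
  set t := max 0 (1 - s) with htdef
  have ht0 : 0 ≤ t := le_max_left _ _
  have hst1 : 1 ≤ s + t := by
    have : 1 - s ≤ t := le_max_right _ _
    linarith
  -- express B
  have hB : B = (s - 1) • (1 : Matrix (Fin m × Fin m) (Fin m × Fin m) ℝ) + RG := by
    have h1 : B = s • (1 : Matrix (Fin m × Fin m) (Fin m × Fin m) ℝ) - (1 - RG) := by
      rw [hEq]; abel
    rw [h1, sub_smul, one_smul]; abel
  refine ⟨?_, s + t, (s + t - 1) • (1 : Matrix (Fin m × Fin m) (Fin m × Fin m) ℝ) + RY,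
    ?_, ?_, ?_⟩
  · intro i j hij
    simp only [Matrix.sub_apply, Matrix.one_apply_ne hij, zero_sub, neg_nonpos]
    exact hRY0 i j
  · intro i j
    simp only [Matrix.add_apply, Matrix.smul_apply, smul_eq_mul]
    refine add_nonneg (mul_nonneg (by linarith) ?_) (hRY0 i j)
    by_cases h : i = j <;> simp [Matrix.one_apply, h]
  · rw [sub_smul, one_smul]; abel
  · have hkey : (s + t - 1) • (1 : Matrix (Fin m × Fin m) (Fin m × Fin m) ℝ) + RG
        = B + t • 1 := by
      rw [hB]
      have : (s + t - 1) = (s - 1) + t := by ring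
      rw [this, add_smul]; abel
    have h1 : specRad ((s + t - 1) • (1 : Matrix (Fin m × Fin m) (Fin m × Fin m) ℝ) + RY)
        ≤ specRad (B + t • 1) := by
      rw [← hkey]
      refine specRad_mono ?_ ?_
      · intro i j
        simp only [Matrix.add_apply, Matrix.smul_apply, smul_eq_mul]
        refine add_nonneg (mul_nonneg (by linarith) ?_) (hRY0 i j)
        by_cases h : i = j <;> simp [Matrix.one_apply, h]
      · intro i j
        simp only [Matrix.add_apply]
        exact add_le_add_right (hRle i j) _
    have h2 := specRad_add_smul_one_le B t ht0
    calc specRad ((s + t - 1) • (1 : Matrix (Fin m × Fin m) (Fin m × Fin m) ℝ) + RY)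
        ≤ specRad B + ENNReal.ofReal t := h1.trans h2
      _ < ENNReal.ofReal s + ENNReal.ofReal t :=
          ENNReal.add_lt_add_right ENNReal.ofReal_ne_top hρ
      _ = ENNReal.ofReal (s + t) := (ENNReal.ofReal_add hs0.le ht0).symm
end

section
/- Suppose an m×m matrix X satisfies (i) 𝒢(X) ≥ 0, (ii) 0 ≤ X ≤ G, and (iii) I − Σ_{v=1}^{N} Σ_{j=0}^{v-1} (X^{v-1-j})ᵀ ⊗ (A_v X^{j}) is a nonsingular M-matrix, and let Z be an m×m matrix with 0 ≤ Z ≤ X. Then I − Σ_{v=1}^{N} Σ_{j=0}^{v-1} (Z^{v-1-j})ᵀ ⊗ (A_v Z^{j}) is a nonsingular M-matrix, and there exists a unique m×m matrix Y such that Σ_{v=1}^{N} Σ_{j=0}^{v-1} A_v Z^{j} (Y − X) Z^{v-1-j} − (Y − X) = −𝒢(X). -/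
open Matrix Finset Kronecker
open scoped ENNReal

section SpecRadLemmas

variable {n : Type*} [Fintype n] [DecidableEq n]

attribute [local instance] Matrix.linftyOpNormedRing Matrix.linftyOpNormedAlgebra

noncomputable local instance : CompleteSpace (Matrix n n ℂ) := FiniteDimensional.complete ℂ _

private lemma nnnorm_map_le {P Q : Matrix n n ℝ} (hP : ∀ i j, 0 ≤ P i j)
    (hPQ : ∀ i j, P i j ≤ Q i j) :
    ‖P.map (algebraMap ℝ ℂ)‖₊ ≤ ‖Q.map (algebraMap ℝ ℂ)‖₊ := by
  rw [Matrix.linfty_opNNNorm_def, Matrix.linfty_opNNNorm_def]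
  refine Finset.sup_mono_fun fun i _ => Finset.sum_le_sum fun j _ => ?_
  simp only [Matrix.map_apply]
  rw [show ((algebraMap ℝ ℂ) (P i j)) = ((P i j : ℝ) : ℂ) from rfl,
    show ((algebraMap ℝ ℂ) (Q i j)) = ((Q i j : ℝ) : ℂ) from rfl]
  rw [Complex.nnnorm_real, Complex.nnnorm_real]
  have h1 : |P i j| ≤ |Q i j| := by
    rw [abs_of_nonneg (hP i j), abs_of_nonneg ((hP i j).trans (hPQ i j))]
    exact hPQ i j
  exact NNReal.coe_le_coe.mp (by simpa [Real.norm_eq_abs] using h1)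

lemma pow_nonneg_le {P Q : Matrix n n ℝ} (hP : ∀ i j, 0 ≤ P i j)
    (hQ : ∀ i j, 0 ≤ Q i j) (hPQ : ∀ i j, P i j ≤ Q i j) (k : ℕ) :
    (∀ i j, 0 ≤ (P ^ k) i j) ∧ (∀ i j, (P ^ k) i j ≤ (Q ^ k) i j) := by
  induction k with
  | zero => simp [Matrix.one_apply]; exact fun i j => by split <;> simp
  | succ k ih =>
    constructor
    · intro i j
      rw [pow_succ, Matrix.mul_apply]
      exact Finset.sum_nonneg fun l _ => mul_nonneg (ih.1 i l) (hP l j)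
    · intro i j
      rw [pow_succ, pow_succ, Matrix.mul_apply, Matrix.mul_apply]
      exact Finset.sum_le_sum fun l _ =>
        mul_le_mul (ih.2 i l) (hPQ l j) (hP l j) (le_trans (ih.1 i l) (ih.2 i l))

lemma specRad_mono_s5 [Nonempty n] {P Q : Matrix n n ℝ} (hP : ∀ i j, 0 ≤ P i j)
    (hPQ : ∀ i j, P i j ≤ Q i j) : specRad P ≤ specRad Q := by
  have hQ : ∀ i j, 0 ≤ Q i j := fun i j => (hP i j).trans (hPQ i j)
  have key : ∀ k : ℕ, ‖(P.map (algebraMap ℝ ℂ)) ^ k‖₊ ≤ ‖(Q.map (algebraMap ℝ ℂ)) ^ k‖₊ := by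
    intro k
    have hPmap : (P.map (algebraMap ℝ ℂ)) ^ k = (P ^ k).map (algebraMap ℝ ℂ) := by
      rw [← RingHom.mapMatrix_apply, ← RingHom.mapMatrix_apply, map_pow]
    have hQmap : (Q.map (algebraMap ℝ ℂ)) ^ k = (Q ^ k).map (algebraMap ℝ ℂ) := by
      rw [← RingHom.mapMatrix_apply, ← RingHom.mapMatrix_apply, map_pow]
    rw [hPmap, hQmap]
    exact nnnorm_map_le (pow_nonneg_le hP hQ hPQ k).1 (pow_nonneg_le hP hQ hPQ k).2
  calc specRad P
      ≤ Filter.atTop.liminf (fun k : ℕ => (‖(P.map (algebraMap ℝ ℂ)) ^ k‖₊ : ℝ≥0∞) ^ (1 / (k:ℝ))) :=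
        spectrum.spectralRadius_le_liminf_pow_nnnorm_pow_one_div ℂ _
    _ ≤ Filter.atTop.liminf (fun k : ℕ => (‖(Q.map (algebraMap ℝ ℂ)) ^ k‖₊ : ℝ≥0∞) ^ (1 / (k:ℝ))) := by
        refine Filter.liminf_le_liminf (Filter.Eventually.of_forall fun k => ?_)
        exact ENNReal.rpow_le_rpow (by exact_mod_cast key k) (by positivity)
    _ = specRad Q :=
        (spectrum.pow_nnnorm_pow_one_div_tendsto_nhds_spectralRadius _).liminf_eq

private lemma map_smul_one_add (c : ℝ) (B : Matrix n n ℝ) :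
    (c • (1 : Matrix n n ℝ) + B).map (algebraMap ℝ ℂ) =
      (c : ℂ) • (1 : Matrix n n ℂ) + B.map (algebraMap ℝ ℂ) := by
  ext i j
  simp [Matrix.map_apply, Matrix.add_apply, Matrix.smul_apply, Matrix.one_apply, apply_ite]

lemma specRad_smul_one_add (c : ℝ) (hc : 0 ≤ c) (B : Matrix n n ℝ) :
    specRad (c • (1 : Matrix n n ℝ) + B) ≤ ENNReal.ofReal c + specRad B := by
  unfold specRad
  rw [map_smul_one_add]
  set a := B.map (algebraMap ℝ ℂ)
  refine iSup₂_le fun k hk => ?_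
  have hk' : k - (c : ℂ) ∈ spectrum ℂ a := by
    rw [spectrum.mem_iff] at hk ⊢
    convert hk using 2
    rw [Algebra.algebraMap_eq_smul_one, Algebra.algebraMap_eq_smul_one, sub_smul]
    abel
  have h1 : (‖k - (c:ℂ)‖₊ : ℝ≥0∞) ≤ spectralRadius ℂ a :=
    le_iSup₂ (f := fun (x : ℂ) (_ : x ∈ spectrum ℂ a) => (‖x‖₊ : ℝ≥0∞)) (k - (c:ℂ)) hk'
  have h2 : ‖k‖₊ ≤ ‖(c:ℂ)‖₊ + ‖k - (c:ℂ)‖₊ := by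
    calc ‖k‖₊ = ‖(c:ℂ) + (k - (c:ℂ))‖₊ := by ring_nf
      _ ≤ ‖(c:ℂ)‖₊ + ‖k - (c:ℂ)‖₊ := nnnorm_add_le _ _
  calc (‖k‖₊ : ℝ≥0∞) ≤ (‖(c:ℂ)‖₊ : ℝ≥0∞) + ‖k - (c:ℂ)‖₊ := by exact_mod_cast h2
    _ ≤ ENNReal.ofReal c + spectralRadius ℂ a := by
        refine add_le_add ?_ h1
        rw [Complex.nnnorm_real, ENNReal.ofReal]
        simp [Real.nnnorm_of_nonneg hc, Real.toNNReal_of_nonneg hc]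
    _ = ENNReal.ofReal c + specRad B := rfl

lemma isUnit_det_smul_one_sub {B : Matrix n n ℝ} {s : ℝ}
    (h : specRad B < ENNReal.ofReal s) :
    IsUnit (s • (1 : Matrix n n ℝ) - B).det := by
  have hs : 0 < s := by
    by_contra hs
    rw [ENNReal.ofReal_of_nonpos (le_of_not_gt hs)] at h
    exact (not_lt_of_ge zero_le) h
  have h2 : (‖(s:ℂ)‖₊ : ℝ≥0∞) = ENNReal.ofReal s := by
    rw [Complex.nnnorm_real, ENNReal.ofReal]
    simp [Real.nnnorm_of_nonneg hs.le, Real.toNNReal_of_nonneg hs.le]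
  have hres : (s : ℂ) ∈ resolventSet ℂ (B.map (algebraMap ℝ ℂ)) :=
    spectrum.mem_resolventSet_of_spectralRadius_lt (by rw [h2]; exact h)
  have hunit : IsUnit (algebraMap ℂ (Matrix n n ℂ) s - B.map (algebraMap ℝ ℂ)) := by
    have := hres
    rwa [resolventSet, Set.mem_setOf_eq, Algebra.algebraMap_eq_smul_one] at this
  have hmapeq : (s • (1 : Matrix n n ℝ) - B).map (algebraMap ℝ ℂ) =
      algebraMap ℂ (Matrix n n ℂ) s - B.map (algebraMap ℝ ℂ) := by
    ext i j
    simp [Matrix.map_apply, Matrix.sub_apply, Matrix.smul_apply, Matrix.one_apply,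
      Matrix.algebraMap_matrix_apply, apply_ite]
  rw [← hmapeq] at hunit
  have hdet : IsUnit ((s • (1 : Matrix n n ℝ) - B).map (algebraMap ℝ ℂ)).det :=
    hunit.map (Matrix.detMonoidHom)
  have hdet2 : (algebraMap ℝ ℂ) (s • (1 : Matrix n n ℝ) - B).det =
      ((s • (1 : Matrix n n ℝ) - B).map (algebraMap ℝ ℂ)).det := by
    rw [RingHom.map_det]; rfl
  rw [← hdet2] at hdet
  have hne : (s • (1 : Matrix n n ℝ) - B).det ≠ 0 := fun h0 => hdet.ne_zero (by rw [h0]; simp)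
  exact isUnit_iff_ne_zero.mpr hne

end SpecRadLemmas

section Helpers

variable {n : Type*} [Fintype n] [DecidableEq n]

lemma sum_mulVec' {ι : Type*} (s : Finset ι) (f : ι → Matrix n n ℝ) (w : n → ℝ) :
    (∑ i ∈ s, f i) *ᵥ w = ∑ i ∈ s, f i *ᵥ w := by
  funext p
  simp only [Matrix.mulVec, dotProduct, Matrix.sum_apply, Finset.sum_apply, Finset.sum_mul]
  rw [Finset.sum_comm]

end Helpers

lemma kron_mulVec {m : ℕ} (T S W : Matrix (Fin m) (Fin m) ℝ) (p : Fin m × Fin m) :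
    ((Tᵀ ⊗ₖ S) *ᵥ fun q : Fin m × Fin m => W q.2 q.1) p = (S * W * T) p.2 p.1 := by
  simp only [Matrix.mulVec, dotProduct, Fintype.sum_prod_type, Matrix.kroneckerMap_apply,
    Matrix.transpose_apply, Matrix.mul_apply]
  refine Finset.sum_congr rfl fun q1 _ => ?_
  rw [Finset.sum_mul]
  refine Finset.sum_congr rfl fun q2 _ => ?_
  ring

theorem stmt5 (m N : ℕ) (hm : 1 ≤ m) (hN : 1 ≤ N)
    (A : ℕ → Matrix (Fin m) (Fin m) ℝ)
    (hA : ∀ v, v ≤ N → ∀ i j, 0 ≤ A v i j)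
    (G : Matrix (Fin m) (Fin m) ℝ)
    (hG0 : ∀ i j, 0 ≤ G i j)
    (hGsol : ∑ v ∈ Finset.range (N + 1), A v * G ^ v = G)
    (hGmin : ∀ S : Matrix (Fin m) (Fin m) ℝ, (∀ i j, 0 ≤ S i j) →
      ∑ v ∈ Finset.range (N + 1), A v * S ^ v = S → ∀ i j, G i j ≤ S i j)
    (X : Matrix (Fin m) (Fin m) ℝ)
    (hGX : ∀ i j, 0 ≤ (∑ v ∈ Finset.range (N + 1), A v * X ^ v - X) i j)
    (hX0 : ∀ i j, 0 ≤ X i j) (hXG : ∀ i j, X i j ≤ G i j)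
    (hMX : IsNonsingMMatrix
      ((1 : Matrix (Fin m × Fin m) (Fin m × Fin m) ℝ) -
      ∑ v ∈ Finset.Icc 1 N, ∑ j ∈ Finset.range v,
        (X ^ (v - 1 - j))ᵀ ⊗ₖ (A v * X ^ j)))
    (Z : Matrix (Fin m) (Fin m) ℝ)
    (hZ0 : ∀ i j, 0 ≤ Z i j) (hZX : ∀ i j, Z i j ≤ X i j) :
    IsNonsingMMatrix
      ((1 : Matrix (Fin m × Fin m) (Fin m × Fin m) ℝ) -
      ∑ v ∈ Finset.Icc 1 N, ∑ j ∈ Finset.range v,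
        (Z ^ (v - 1 - j))ᵀ ⊗ₖ (A v * Z ^ j)) ∧
    ∃! Y : Matrix (Fin m) (Fin m) ℝ,
      ∑ v ∈ Finset.Icc 1 N, ∑ j ∈ Finset.range v,
        A v * Z ^ j * (Y - X) * Z ^ (v - 1 - j) - (Y - X) =
      -(∑ v ∈ Finset.range (N + 1), A v * X ^ v - X) := by
  haveI : Nonempty (Fin m) := ⟨⟨0, hm⟩⟩
  set BZ : Matrix (Fin m × Fin m) (Fin m × Fin m) ℝ :=
    ∑ v ∈ Finset.Icc 1 N, ∑ j ∈ Finset.range v, (Z ^ (v - 1 - j))ᵀ ⊗ₖ (A v * Z ^ j) with hBZdef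
  set BX : Matrix (Fin m × Fin m) (Fin m × Fin m) ℝ :=
    ∑ v ∈ Finset.Icc 1 N, ∑ j ∈ Finset.range v, (X ^ (v - 1 - j))ᵀ ⊗ₖ (A v * X ^ j) with hBXdef
  -- entrywise facts
  have hZpow := fun k => pow_nonneg_le hZ0 hX0 hZX k
  have hXpow : ∀ k, ∀ i j, 0 ≤ (X ^ k) i j := fun k =>
    (pow_nonneg_le hX0 hX0 (fun i j => le_refl _) k).1
  have hAZ0 : ∀ v, v ≤ N → ∀ k : ℕ, ∀ i j, 0 ≤ (A v * Z ^ k) i j := by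
    intro v hv k i j
    rw [Matrix.mul_apply]
    exact Finset.sum_nonneg fun l _ => mul_nonneg (hA v hv i l) ((hZpow k).1 l j)
  have hAZX : ∀ v, v ≤ N → ∀ k : ℕ, ∀ i j, (A v * Z ^ k) i j ≤ (A v * X ^ k) i j := by
    intro v hv k i j
    rw [Matrix.mul_apply, Matrix.mul_apply]
    exact Finset.sum_le_sum fun l _ =>
      mul_le_mul_of_nonneg_left ((hZpow k).2 l j) (hA v hv i l)
  have hBZ0 : ∀ p q, 0 ≤ BZ p q := by
    intro p q
    rw [hBZdef, Matrix.sum_apply]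
    refine Finset.sum_nonneg fun v hv => ?_
    rw [Matrix.sum_apply]
    refine Finset.sum_nonneg fun j _ => ?_
    rw [Matrix.kroneckerMap_apply, Matrix.transpose_apply]
    exact mul_nonneg ((hZpow _).1 _ _) (hAZ0 v (Finset.mem_Icc.mp hv).2 j p.2 q.2)
  have hBZX : ∀ p q, BZ p q ≤ BX p q := by
    intro p q
    rw [hBZdef, hBXdef, Matrix.sum_apply, Matrix.sum_apply]
    refine Finset.sum_le_sum fun v hv => ?_
    rw [Matrix.sum_apply, Matrix.sum_apply]
    refine Finset.sum_le_sum fun j _ => ?_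
    rw [Matrix.kroneckerMap_apply, Matrix.transpose_apply,
      Matrix.kroneckerMap_apply, Matrix.transpose_apply]
    have hvN := (Finset.mem_Icc.mp hv).2
    exact mul_le_mul ((hZpow _).2 _ _) (hAZX v hvN j p.2 q.2)
      (hAZ0 v hvN j p.2 q.2) (hXpow _ _ _)
  -- First conclusion
  obtain ⟨hZmat, s, B, hB0, hEq, hρ⟩ := hMX
  have hs : 0 < s := by
    by_contra hs
    rw [ENNReal.ofReal_of_nonpos (le_of_not_gt hs)] at hρ
    exact (not_lt_of_ge zero_le) hρ
  set s' : ℝ := max s 1 with hs'def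
  have hs's : s ≤ s' := le_max_left _ _
  have hs'1 : (1 : ℝ) ≤ s' := le_max_right _ _
  set B'' : Matrix (Fin m × Fin m) (Fin m × Fin m) ℝ := (s' - 1) • 1 + BZ with hB''def
  have hKeq : (1 : Matrix (Fin m × Fin m) (Fin m × Fin m) ℝ) - BZ = s' • 1 - B'' := by
    rw [hB''def, sub_smul, one_smul]
    abel
  have hB''0 : ∀ p q, 0 ≤ B'' p q := by
    intro p q
    rw [hB''def, Matrix.add_apply, Matrix.smul_apply, smul_eq_mul]
    rcases eq_or_ne p q with h | h
    · subst h
      rw [Matrix.one_apply_eq, mul_one]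
      have := hBZ0 p p; linarith
    · rw [Matrix.one_apply_ne h, mul_zero]
      have := hBZ0 p q; linarith
  have hB : s • (1 : Matrix (Fin m × Fin m) (Fin m × Fin m) ℝ) - (1 - BX) = B := by
    rw [hEq, sub_sub_cancel]
  set C : Matrix (Fin m × Fin m) (Fin m × Fin m) ℝ := (s' - s) • 1 + B with hCdef
  have hB''C : ∀ p q, B'' p q ≤ C p q := by
    intro p q
    rw [hB''def, hCdef, ← hB]
    simp only [Matrix.add_apply, Matrix.smul_apply, Matrix.sub_apply, smul_eq_mul]
    rcases eq_or_ne p q with h | h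
    · subst h
      rw [Matrix.one_apply_eq]
      have := hBZX p p; nlinarith [hBZX p p]
    · rw [Matrix.one_apply_ne h]
      have := hBZX p q; nlinarith [hBZX p q]
  have hlt : specRad B'' < ENNReal.ofReal s' := by
    have h1 : specRad B'' ≤ ENNReal.ofReal (s' - s) + specRad B :=
      le_trans (specRad_mono_s5 hB''0 hB''C) (specRad_smul_one_add (s' - s) (by linarith) B)
    have h2 : ENNReal.ofReal (s' - s) + specRad B <
        ENNReal.ofReal (s' - s) + ENNReal.ofReal s :=
      ENNReal.add_lt_add_left ENNReal.ofReal_ne_top hρ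
    have h3 : ENNReal.ofReal (s' - s) + ENNReal.ofReal s = ENNReal.ofReal s' := by
      rw [← ENNReal.ofReal_add (by linarith) hs.le]
      ring_nf
    exact lt_of_le_of_lt h1 (by rw [← h3]; exact h2)
  have conc1 : IsNonsingMMatrix ((1 : Matrix (Fin m × Fin m) (Fin m × Fin m) ℝ) - BZ) := by
    refine ⟨fun p q hpq => ?_, s', B'', hB''0, hKeq, hlt⟩
    rw [Matrix.sub_apply, Matrix.one_apply_ne hpq]
    have := hBZ0 p q; linarith
  refine ⟨conc1, ?_⟩
  -- Second conclusion
  set K : Matrix (Fin m × Fin m) (Fin m × Fin m) ℝ := 1 - BZ with hKdef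
  have hKdet : IsUnit K.det := by
    rw [hKeq]
    exact isUnit_det_smul_one_sub hlt
  have hinj : ∀ x y : Fin m × Fin m → ℝ, K *ᵥ x = K *ᵥ y → x = y := by
    intro x y hxy
    have h1 : K⁻¹ *ᵥ (K *ᵥ x) = K⁻¹ *ᵥ (K *ᵥ y) := by rw [hxy]
    rwa [Matrix.mulVec_mulVec, Matrix.mulVec_mulVec, Matrix.nonsing_inv_mul K hKdet,
      Matrix.one_mulVec, Matrix.one_mulVec] at h1
  -- vec correspondence
  have key : ∀ W : Matrix (Fin m) (Fin m) ℝ,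
      (BZ *ᵥ fun q : Fin m × Fin m => W q.2 q.1) =
      fun p : Fin m × Fin m =>
        (∑ v ∈ Finset.Icc 1 N, ∑ j ∈ Finset.range v,
          A v * Z ^ j * W * Z ^ (v - 1 - j)) p.2 p.1 := by
    intro W
    funext p
    rw [hBZdef, sum_mulVec']
    simp only [Finset.sum_apply, Matrix.sum_apply]
    refine Finset.sum_congr rfl fun v _ => ?_
    rw [sum_mulVec']
    simp only [Finset.sum_apply, Matrix.sum_apply]
    exact Finset.sum_congr rfl fun j _ => kron_mulVec (Z ^ (v - 1 - j)) (A v * Z ^ j) W p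
  set g : Matrix (Fin m) (Fin m) ℝ := ∑ v ∈ Finset.range (N + 1), A v * X ^ v - X with hgdef
  -- equation in vec form
  have hvecform : ∀ Y : Matrix (Fin m) (Fin m) ℝ,
      (∑ v ∈ Finset.Icc 1 N, ∑ j ∈ Finset.range v,
        A v * Z ^ j * (Y - X) * Z ^ (v - 1 - j) - (Y - X) = -g) ↔
      K *ᵥ (fun q : Fin m × Fin m => (Y - X) q.2 q.1) = fun q : Fin m × Fin m => g q.2 q.1 := by
    intro Y
    have hKmv : K *ᵥ (fun q : Fin m × Fin m => (Y - X) q.2 q.1) =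
        fun p : Fin m × Fin m =>
          -((∑ v ∈ Finset.Icc 1 N, ∑ j ∈ Finset.range v,
            A v * Z ^ j * (Y - X) * Z ^ (v - 1 - j) - (Y - X)) p.2 p.1) := by
      funext p
      rw [hKdef, Matrix.sub_mulVec, Matrix.one_mulVec, key (Y - X)]
      simp only [Pi.sub_apply, Matrix.sub_apply]
      ring
    constructor
    · intro hE
      rw [hKmv]
      funext p
      rw [hE]
      simp only [Matrix.neg_apply, neg_neg]
    · intro hV
      rw [hKmv] at hV
      ext i j
      have h5 := congrFun hV (j, i)
      simp only [Matrix.neg_apply] at h5 ⊢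
      simp only [Matrix.sub_apply] at h5 ⊢
      linarith [h5]
  -- construct unique solution
  set b : Fin m × Fin m → ℝ := fun q => g q.2 q.1 with hbdef
  set w₀ : Fin m × Fin m → ℝ := K⁻¹ *ᵥ b with hw₀def
  have hKw₀ : K *ᵥ w₀ = b := by
    rw [hw₀def, Matrix.mulVec_mulVec, Matrix.mul_nonsing_inv K hKdet, Matrix.one_mulVec]
  set Y₀ : Matrix (Fin m) (Fin m) ℝ := X + Matrix.of (fun i j => w₀ (j, i)) with hY₀def
  have hvecY₀ : (fun q : Fin m × Fin m => (Y₀ - X) q.2 q.1) = w₀ := by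
    funext q
    rw [hY₀def]
    simp [Matrix.add_apply, Matrix.sub_apply]
  refine ⟨Y₀, ?_, ?_⟩
  · exact (hvecform Y₀).mpr (by rw [hvecY₀]; exact hKw₀)
  · intro Y hY
    have hY' := (hvecform Y).mp hY
    have : (fun q : Fin m × Fin m => (Y - X) q.2 q.1) = w₀ := by
      apply hinj
      rw [hY', hKw₀]
    ext i j
    have h1 := congrFun this (j, i)
    have h2 := congrFun hvecY₀ (j, i)
    simp only [Matrix.sub_apply] at h1 h2
    linarith
end
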